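/- arXiv:2309.16607 — 4 statements merged into one kernel-verified Lean document; each statement's English description precedes it below -/
import Mathlib

section
/- Let η and ν be partitions such that ν_i ≥ η_{i+1} for every i ≥ 1. Then, as an identity of Laurent polynomials in ℤ[t, t⁻¹] (equivalently, for every nonzero rational number t): Σ_μ (−1)^{|μ|} t^{−μ·ν + Σ_{j≥1} C(μ_j,2)} ψ_{η/μ}(t) = (−1)^{|η|} (1−t)^{η_1} t^{−η·ν + Σ_{j≥1} C(η_j,2)} ∏_{i≥1} [ν_i − η_{i+1} choose η_i − η_{i+1}]_t · [η_i − η_{i+1}]_t!, where the sum on the left runs over all partitions μ with μ ⊆ η (the summand vanishes unless η/μ is a horizontal strip), and C(m,2) = m(m−1)/2. -/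
open Matrix Module Polynomial

attribute [local instance] Classical.propDecidable

/-- `μ` is a partition: its parts are weakly decreasing. -/
def IsPtn (μ : ℕ →₀ ℕ) : Prop := ∀ i, μ (i + 1) ≤ μ i

/-- The size `|μ|` of a partition. -/
def ptnSize (μ : ℕ →₀ ℕ) : ℕ := μ.sum fun _ v => v

/-- `W + ΔW + ⋯ + Δ^{j-1}W`. -/
noncomputable def iterSpan {F : Type} [Field F] {n : ℕ} (Δ : Matrix (Fin n) (Fin n) F)
    (W : Submodule F (Fin n → F)) (j : ℕ) : Submodule F (Fin n → F) :=
  ⨆ i ∈ Finset.range j, W.map (Δ ^ i).mulVecLin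

/-- `W` has `Δ`-profile `μ`. -/
def HasProfile {F : Type} [Field F] {n : ℕ} (Δ : Matrix (Fin n) (Fin n) F)
    (μ : ℕ →₀ ℕ) (W : Submodule F (Fin n → F)) : Prop :=
  ∀ j : ℕ, Module.finrank F (iterSpan Δ W (j + 1)) = ∑ i ∈ Finset.range (j + 1), μ i

/-- `σ(μ, Δ)`: the number of subspaces with `Δ`-profile `μ`. -/
noncomputable def sigmaProf {F : Type} [Field F] {n : ℕ} (μ : ℕ →₀ ℕ)
    (Δ : Matrix (Fin n) (Fin n) F) : ℕ :=
  Nat.card {W : Submodule F (Fin n → F) // HasProfile Δ μ W}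

/-- `X_α(Δ)`: the number of flags of `Δ`-invariant subspaces with successive
quotient dimensions given by `α`. -/
noncomputable def Xflag {F : Type} [Field F] {n ℓ : ℕ} (Δ : Matrix (Fin n) (Fin n) F)
    (α : Fin ℓ → ℕ) : ℕ :=
  Nat.card {W : Fin (ℓ + 1) → Submodule F (Fin n → F) //
    Monotone W ∧ W 0 = ⊥ ∧ W (Fin.last ℓ) = ⊤ ∧
    (∀ i, (W i).map Δ.mulVecLin ≤ W i) ∧
    ∀ i : Fin ℓ, Module.finrank F (W i.succ) = Module.finrank F (W i.castSucc) + α i}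

/-- The Gaussian binomial coefficient as a polynomial in `t`. -/
noncomputable def qbp : ℕ → ℕ → Polynomial ℤ
  | _, 0 => 1
  | 0, _ + 1 => 0
  | a + 1, b + 1 => qbp a b + Polynomial.X ^ (b + 1) * qbp a (b + 1)

/-- The `q`-integer `[m]_t`. -/
def qNat (t : ℚ) (m : ℕ) : ℚ := ∑ i ∈ Finset.range m, t ^ i

/-- The `q`-factorial `[m]_t!`. -/
def qFact (t : ℚ) (m : ℕ) : ℚ := ∏ i ∈ Finset.range m, qNat t (i + 1)


/-- `μ·ν = ∑_{j≥1} μ_j ν_j`. -/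
def dotP (μ ν : ℕ →₀ ℕ) : ℕ := μ.sum fun j a => a * ν j

/-- `∑_{j≥1} C(μ_j, 2)`. -/
def ch2 (μ : ℕ →₀ ℕ) : ℕ := μ.sum fun _ a => a.choose 2

/-- `ψ_{η/μ}(t) = ∏_{i≥1} [η_i - η_{i+1} choose η_i - μ_i]_t`, interpreted as `0`
when `μ ⊄ η`. -/
noncomputable def psiQ (t : ℚ) (η μ : ℕ →₀ ℕ) : ℚ :=
  if μ ≤ η then ∏ᶠ i : ℕ, Polynomial.aeval t (qbp (η i - η (i + 1)) (η i - μ i)) else 0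

noncomputable def Bq (t : ℚ) (a b : ℕ) : ℚ := Polynomial.aeval t (qbp a b)

lemma qbp_zero_right (a : ℕ) : qbp a 0 = 1 := by cases a <;> rfl

lemma qbp_zero_of_lt : ∀ a b : ℕ, a < b → qbp a b = 0
  | _, 0, h => absurd h (by omega)
  | 0, b + 1, _ => rfl
  | a + 1, b + 1, h => by
    rw [qbp, qbp_zero_of_lt a b (by omega), qbp_zero_of_lt a (b+1) (by omega)]
    simp

lemma qbp_self : ∀ a : ℕ, qbp a a = 1
  | 0 => rfl
  | a + 1 => by rw [qbp, qbp_self a, qbp_zero_of_lt a (a+1) (by omega)]; simp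

lemma Bq_zero_right (t : ℚ) (a : ℕ) : Bq t a 0 = 1 := by simp [Bq, qbp_zero_right]
lemma Bq_zero_of_lt (t : ℚ) {a b : ℕ} (h : a < b) : Bq t a b = 0 := by
  simp [Bq, qbp_zero_of_lt a b h]
lemma Bq_self (t : ℚ) (a : ℕ) : Bq t a a = 1 := by simp [Bq, qbp_self]
lemma Bq_succ (t : ℚ) (a b : ℕ) :
    Bq t (a+1) (b+1) = Bq t a b + t ^ (b+1) * Bq t a (b+1) := by
  simp [Bq, qbp, map_add, _root_.map_mul, map_pow]

lemma qNat_add (t : ℚ) (a b : ℕ) : qNat t (a + b) = qNat t a + t ^ a * qNat t b := by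
  simp only [qNat, Finset.sum_range_add, Finset.mul_sum, pow_add]

lemma one_sub_pow (t : ℚ) (m : ℕ) : 1 - t ^ m = (1 - t) * qNat t m := by
  have := geom_sum_mul t m
  unfold qNat
  linear_combination this

/-- q-binomial theorem -/
lemma qbin (t : ℚ) : ∀ e : ℕ, ∀ x : ℚ,
    ∑ k ∈ Finset.range (e+1), (-1:ℚ)^k * t^(k.choose 2) * x^k * Bq t e k
      = ∏ j ∈ Finset.range e, (1 - x * t^j)
  | 0, x => by simp [Bq_zero_right]
  | e + 1, x => by
    set f : ℕ → ℚ := fun k => (-1:ℚ)^k * t^(k.choose 2) * x^k * Bq t (e+1) k with hf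
    set g : ℕ → ℚ := fun k => (-1:ℚ)^k * t^(k.choose 2) * (t*x)^k * Bq t e k with hg
    set A : ℚ := ∑ k ∈ Finset.range (e+1), g k with hA
    have key : ∑ k ∈ Finset.range (e+2), f k = (1 - x) * A := by
      rw [Finset.sum_range_succ' f (e+1)]
      have h1 : ∀ k ∈ Finset.range (e+1), f (k+1) = -x * g k + g (k+1) := by
        intro k _
        simp only [hf, hg]
        rw [Bq_succ]
        have hch : (k+1).choose 2 = k.choose 2 + k := by
          rw [Nat.choose_succ_succ, Nat.choose_one_right, Nat.add_comm]
        rw [hch]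
        ring
      rw [Finset.sum_congr rfl h1, Finset.sum_add_distrib, ← Finset.mul_sum, ← hA]
      have h2 : ∑ k ∈ Finset.range (e+1), g (k+1) = A - 1 := by
        have h3 : ∑ k ∈ Finset.range (e+2), g k = A := by
          rw [Finset.sum_range_succ, hA]
          have : g (e+1) = 0 := by
            simp only [hg]; rw [Bq_zero_of_lt t (by omega)]; ring
          rw [this, add_zero]
        rw [Finset.sum_range_succ' g (e+1)] at h3
        have hg0 : g 0 = 1 := by simp [hg, Bq_zero_right]
        rw [hg0] at h3
        linarith
      have hf0 : f 0 = 1 := by simp [hf, Bq_zero_right]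
      rw [h2, hf0]
      ring
    rw [key, hA, qbin t e (t*x), Finset.prod_range_succ', pow_zero, mul_one]
    have hcongr : ∀ j ∈ Finset.range e, (1 - x * t^(j+1)) = (1 - (t*x) * t^j) := by
      intro j _; rw [pow_succ]; ring
    rw [Finset.prod_congr rfl hcongr]
    ring

/-- `[n choose e] * [e]! = [n-e+1][n-e+2]⋯[n]`. -/
lemma qbp_fact (t : ℚ) : ∀ n e : ℕ, e ≤ n →
    Bq t n e * qFact t e = ∏ j ∈ Finset.range e, qNat t (n - e + 1 + j)
  | n, 0, _ => by simp [Bq_zero_right, qFact]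
  | 0, e + 1, h => absurd h (by omega)
  | n + 1, e + 1, h => by
    rw [Bq_succ]
    by_cases he : e + 1 ≤ n
    · have ih1 := qbp_fact t n e (by omega)
      have ih2 := qbp_fact t n (e+1) he
      have hq : qFact t (e+1) = qFact t e * qNat t (e+1) := Finset.prod_range_succ _ _
      have hprod1 : ∏ j ∈ Finset.range (e+1), qNat t (n - (e+1) + 1 + j)
          = qNat t (n - e) * ∏ j ∈ Finset.range e, qNat t (n - e + 1 + j) := by
        rw [Finset.prod_range_succ']
        have h0 : n - (e+1) + 1 + 0 = n - e := by omega
        rw [h0, mul_comm]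
        congr 1
        apply Finset.prod_congr rfl
        intro j _
        congr 1
        omega
      rw [hq, hprod1] at ih2
      have hkey : ∀ j, n + 1 - (e+1) + 1 + j = n - e + 1 + j := fun j => by omega
      simp only [hkey]
      rw [Finset.prod_range_succ, show n - e + 1 + e = n + 1 by omega]
      have harith : qNat t (n+1) = qNat t (e+1) + t^(e+1) * qNat t (n - e) := by
        rw [show n + 1 = (e+1) + (n-e) by omega, qNat_add]
      rw [hq, harith]
      linear_combination qNat t (e+1) * ih1 + t^(e+1) * ih2
    · have hen : e = n := by omega
      subst hen
      rw [Bq_self, Bq_zero_of_lt t (by omega)]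
      have hidx : ∀ j : ℕ, e + 1 - (e+1) + 1 + j = j + 1 := fun j => by omega
      simp only [hidx]
      simp [qFact]

lemma choose_two_succ (n : ℕ) : (n+1).choose 2 = n.choose 2 + n := by
  have h : (n+1).choose 2 = n.choose 1 + n.choose 2 := Nat.choose_succ_succ n 1
  rw [Nat.choose_one_right] at h
  omega

lemma choose_two_add (a b : ℕ) : (a+b).choose 2 = a.choose 2 + a*b + b.choose 2 := by
  induction b with
  | zero => simp
  | succ b ih =>
    have h1 : (a + (b+1)).choose 2 = (a+b).choose 2 + (a+b) := by
      rw [show a + (b+1) = (a+b)+1 by omega, choose_two_succ]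
    have h2 : (b+1).choose 2 = b.choose 2 + b := choose_two_succ b
    have h3 : a * (b+1) = a*b + a := by ring
    omega

lemma two_choose_two_int (k : ℕ) : 2 * ((k.choose 2 : ℕ) : ℤ) = (k:ℤ) * ((k:ℤ) - 1) := by
  have hev : Even (k * (k-1)) := by
    cases k with
    | zero => simp
    | succ n => simpa [Nat.mul_comm] using Nat.even_mul_succ_self n
  obtain ⟨w, hw⟩ := hev
  have h2c : 2 * k.choose 2 = k * (k - 1) := by
    rw [Nat.choose_two_right]; omega
  rcases Nat.eq_zero_or_pos k with h | h
  · subst h; simp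
  · have hc : ((k - 1 : ℕ) : ℤ) = (k:ℤ) - 1 := by omega
    rw [← hc]; exact_mod_cast h2c

lemma term_eq (t : ℚ) (ht : t ≠ 0) (v m k : ℕ) :
    (-1:ℚ)^m * t^(-((m*v : ℕ) : ℤ) + ((m.choose 2 : ℕ) : ℤ))
      = ((-1:ℚ)^(m+k) * t^(-(((m+k)*v : ℕ) : ℤ) + (((m+k).choose 2 : ℕ) : ℤ))) *
        ((-1:ℚ)^k * t^(k.choose 2) * (t^((v:ℤ)-(m+k)+1))^k) := by
  have hsq : (-1:ℚ)^k * (-1:ℚ)^k = 1 := by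
    rw [← pow_add, ← two_mul, pow_mul]; norm_num
  have hexp : (-(((m+k)*v : ℕ) : ℤ) + (((m+k).choose 2 : ℕ) : ℤ)) + ((k.choose 2 : ℕ) : ℤ)
      + ((v:ℤ)-(m+k)+1) * k = -((m*v : ℕ) : ℤ) + ((m.choose 2 : ℕ) : ℤ) := by
    push_cast [choose_two_add m k]
    linear_combination two_choose_two_int k
  rw [show (t:ℚ)^(k.choose 2) = t^((k.choose 2 : ℕ) : ℤ) from (zpow_natCast t _).symm,
     show (t^((v:ℤ)-(m+k)+1))^k = t^(((v:ℤ)-(m+k)+1) * k) from by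
       rw [← zpow_natCast (t^((v:ℤ)-(m+k)+1)) k, ← _root_.zpow_mul],
     ← hexp,
     zpow_add₀ ht ((-(((m+k)*v : ℕ) : ℤ) + (((m+k).choose 2 : ℕ) : ℤ)) + ((k.choose 2 : ℕ) : ℤ)) (((v:ℤ)-(m+k)+1) * k),
     zpow_add₀ ht (-(((m+k)*v : ℕ) : ℤ) + (((m+k).choose 2 : ℕ) : ℤ)) ((k.choose 2 : ℕ) : ℤ)]
  linear_combination (-(t^(-(((m+k)*v : ℕ) : ℤ) + (((m+k).choose 2 : ℕ) : ℤ)) * t^((k.choose 2 : ℕ) : ℤ) * t^(((v:ℤ)-(m+k)+1) * k) * (-1:ℚ)^m)) * hsq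

lemma rowSum (t : ℚ) (ht : t ≠ 0) (c d v : ℕ) (hcd : c ≤ d) (hcv : c ≤ v) :
    ∑ m ∈ Finset.Icc c d, (-1:ℚ)^m * t^(-((m*v : ℕ) : ℤ) + ((m.choose 2 : ℕ) : ℤ)) * Bq t (d-c) (d-m)
      = (-1:ℚ)^d * (1-t)^(d-c) * t^(-((d*v : ℕ) : ℤ) + ((d.choose 2 : ℕ) : ℤ)) *
        (Bq t (v-c) (d-c) * qFact t (d-c)) := by
  set e := d - c with he
  set y : ℤ := (v : ℤ) - d + 1 with hy
  set x : ℚ := t ^ y with hx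
  set C0 : ℚ := (-1:ℚ)^d * t^(-((d*v : ℕ) : ℤ) + ((d.choose 2 : ℕ) : ℤ)) with hC0
  have step1 : ∑ m ∈ Finset.Icc c d, (-1:ℚ)^m * t^(-((m*v : ℕ) : ℤ) + ((m.choose 2 : ℕ) : ℤ)) * Bq t e (d-m)
      = ∑ k ∈ Finset.range (e+1), C0 * ((-1:ℚ)^k * t^(k.choose 2) * x^k * Bq t e k) := by
    apply Finset.sum_nbij' (i := fun m => d - m) (j := fun k => d - k)
    · intro m hm
      simp only [Finset.mem_Icc] at hm
      simp only [Finset.mem_range]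
      omega
    · intro k hk
      simp only [Finset.mem_range] at hk
      simp only [Finset.mem_Icc]
      omega
    · intro m hm
      simp only [Finset.mem_Icc] at hm
      omega
    · intro k hk
      simp only [Finset.mem_range] at hk
      omega
    · intro m hm
      simp only [Finset.mem_Icc] at hm
      have hterm := term_eq t ht v m (d - m)
      rw [show m + (d - m) = d by omega] at hterm
      rw [show ((m:ℤ) + ((d - m : ℕ) : ℤ)) = (d:ℤ) by omega] at hterm
      rw [hterm, hC0, hx]
      ring
  have step2 : ∑ k ∈ Finset.range (e+1), C0 * ((-1:ℚ)^k * t^(k.choose 2) * x^k * Bq t e k)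
      = C0 * ∏ j ∈ Finset.range e, (1 - x * t^j) := by
    rw [← Finset.mul_sum, qbin]
  rw [step1, step2]
  by_cases hv : d ≤ v
  · have hcong : ∀ j ∈ Finset.range e, (1 - x * t^j) = (1-t) * qNat t (v - d + 1 + j) := by
      intro j _
      have hxt : x * t^j = t^((v - d + 1 + j : ℕ)) := by
        rw [hx, ← zpow_natCast t j, ← zpow_add₀ ht, ← zpow_natCast t (v - d + 1 + j)]
        congr 1
        omega
      rw [hxt, one_sub_pow]
    rw [Finset.prod_congr rfl hcong, Finset.prod_mul_distrib, Finset.prod_const,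
      Finset.card_range]
    have hfact : ∏ j ∈ Finset.range e, qNat t (v - d + 1 + j) = Bq t (v-c) e * qFact t e := by
      rw [qbp_fact t (v-c) e (by omega)]
      apply Finset.prod_congr rfl
      intro j _
      congr 1
      omega
    rw [hfact, hC0]
    ring
  · push_neg at hv
    have hz : Bq t (v-c) e = 0 := Bq_zero_of_lt t (by omega)
    rw [hz]
    have hj0 : d - 1 - v ∈ Finset.range e := by
      simp only [Finset.mem_range]; omega
    have hzero : (1 : ℚ) - x * t^(d - 1 - v) = 0 := by
      have hxt : x * t^(d-1-v) = t^(y + (d-1-v : ℕ)) := by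
        rw [hx, ← zpow_natCast t (d-1-v), ← zpow_add₀ ht]
      rw [hxt, show y + ((d-1-v : ℕ) : ℤ) = 0 by rw [hy]; omega]
      simp
    rw [Finset.prod_eq_zero hj0 hzero]
    ring

lemma zpow_sum' (t : ℚ) (ht : t ≠ 0) (s : Finset ℕ) (f : ℕ → ℤ) :
    t ^ (∑ i ∈ s, f i) = ∏ i ∈ s, t ^ f i := by
  induction s using Finset.cons_induction with
  | empty => simp
  | cons a s ha ih => rw [Finset.sum_cons, Finset.prod_cons, zpow_add₀ ht, ih]

lemma tele_sum (f : ℕ → ℕ) (hf : ∀ i, f (i+1) ≤ f i) (M : ℕ) :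
    ∑ i ∈ Finset.range M, (f i - f (i+1)) = f 0 - f M := by
  have hanti : Antitone f := antitone_nat_of_succ_le hf
  induction M with
  | zero => simp
  | succ M ih =>
    rw [Finset.sum_range_succ, ih]
    have h1 : f M ≤ f 0 := hanti (Nat.zero_le M)
    have h2 : f (M+1) ≤ f M := hf M
    omega

theorem statement2' (η ν : ℕ →₀ ℕ) (hη : IsPtn η) (hν : IsPtn ν)
    (hcompat : ∀ i, η (i + 1) ≤ ν i) (t : ℚ) (ht : t ≠ 0) :
    (∑ᶠ μ ∈ {μ : ℕ →₀ ℕ | IsPtn μ ∧ μ ≤ η},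
        (-1 : ℚ) ^ (μ.sum fun _ v => v) * t ^ (-((μ.sum fun j a => a * ν j : ℕ) : ℤ) + ((μ.sum fun _ a => a.choose 2 : ℕ) : ℤ)) *
          (if μ ≤ η then ∏ᶠ i : ℕ, Polynomial.aeval t (qbp (η i - η (i + 1)) (η i - μ i)) else 0)) =
      (-1 : ℚ) ^ (η.sum fun _ v => v) * (1 - t) ^ (η 0) * t ^ (-((η.sum fun j a => a * ν j : ℕ) : ℤ) + ((η.sum fun _ a => a.choose 2 : ℕ) : ℤ)) *
        ∏ᶠ i : ℕ,
          (Polynomial.aeval t (qbp (ν i - η (i + 1)) (η i - η (i + 1))) *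
            qFact t (η i - η (i + 1))) := by
  classical
  set N : ℕ := η.support.sup id + 1 with hN
  have hNz : ∀ i, N ≤ i → η i = 0 := by
    intro i hi
    by_contra h
    have hmem : i ∈ η.support := Finsupp.mem_support_iff.mpr h
    have := Finset.le_sup (f := id) hmem
    simp only [id] at this
    omega
  -- the summand
  set f : (ℕ →₀ ℕ) → ℚ := fun μ =>
    (-1 : ℚ) ^ (μ.sum fun _ v => v) * t ^ (-((μ.sum fun j a => a * ν j : ℕ) : ℤ) + ((μ.sum fun _ a => a.choose 2 : ℕ) : ℤ)) *
      (if μ ≤ η then ∏ᶠ i : ℕ, Polynomial.aeval t (qbp (η i - η (i + 1)) (η i - μ i)) else 0) with hf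
  -- per-coordinate factor
  set F : ℕ → ℕ → ℚ := fun i m =>
    (-1:ℚ)^m * t^(-((m * ν i : ℕ) : ℤ) + ((m.choose 2 : ℕ) : ℤ)) * Bq t (η i - η (i+1)) (η i - m)
    with hF
  -- Step A: finsum to Finset sum
  have hset : {μ : ℕ →₀ ℕ | IsPtn μ ∧ μ ≤ η}
      = ↑((Finset.Iic η).filter (fun μ => IsPtn μ)) := by
    ext μ
    simp only [Set.mem_setOf_eq, Finset.coe_filter, Finset.mem_Iic, Set.mem_setOf_eq]
    tauto
  rw [hset, finsum_mem_coe_finset]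
  -- Step B: restrict to strips
  set T : Finset (ℕ →₀ ℕ) :=
    (Finset.Iic η).filter (fun μ => IsPtn μ ∧ ∀ i, η (i+1) ≤ μ i) with hT
  have hTsub : T ⊆ (Finset.Iic η).filter (fun μ => IsPtn μ) := by
    intro μ hμ
    simp only [hT, Finset.mem_filter] at hμ ⊢
    exact ⟨hμ.1, hμ.2.1⟩
  have hvanish : ∀ μ ∈ (Finset.Iic η).filter (fun μ => IsPtn μ), μ ∉ T → f μ = 0 := by
    intro μ hμ hμT
    simp only [Finset.mem_filter, Finset.mem_Iic] at hμ
    have hex : ∃ i, ¬ (η (i+1) ≤ μ i) := by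
      by_contra hc
      push_neg at hc
      refine hμT ?_
      simp only [hT, Finset.mem_filter, Finset.mem_Iic]
      exact ⟨hμ.1, hμ.2, hc⟩
    obtain ⟨i0, hi0⟩ := hex
    push_neg at hi0
    have hle : μ ≤ η := hμ.1
    have hsupp : Function.mulSupport
        (fun i => Polynomial.aeval (R := ℤ) t (qbp (η i - η (i + 1)) (η i - μ i))) ⊆
        ↑(Finset.range N) := by
      intro i hi
      simp only [Finset.coe_range, Set.mem_Iio]
      by_contra hgt
      push_neg at hgt
      have h1 : η i = 0 := hNz i hgt
      have h2 : η (i+1) = 0 := hNz (i+1) (by omega)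
      have h3 : μ i = 0 := by have := Finsupp.le_def.mp hle i; omega
      apply hi
      simp [h1, h2, h3, qbp_zero_right]
    have hzero : (∏ᶠ i : ℕ, Polynomial.aeval (R := ℤ) t (qbp (η i - η (i + 1)) (η i - μ i))) = 0 := by
      rw [finprod_eq_prod_of_mulSupport_subset _ hsupp]
      refine Finset.prod_eq_zero (i := i0) ?_ ?_
      · simp only [Finset.mem_range]
        have : η (i0+1) ≠ 0 := by omega
        have hmem : (i0+1) ∈ η.support := Finsupp.mem_support_iff.mpr this
        have := Finset.le_sup (f := id) hmem
        simp only [id] at this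
        omega
      · have hlt : η i0 - η (i0+1) < η i0 - μ i0 := by
          have h1 := Finsupp.le_def.mp hle i0
          have h2 := Finsupp.le_def.mp hle (i0+1)
          have h3 := hη i0
          omega
        rw [qbp_zero_of_lt _ _ hlt]
        simp
    simp only [hf, if_pos hle, hzero, mul_zero]
  rw [← Finset.sum_subset hTsub hvanish]
  -- Step C: factorize the summand over T, and transfer to pi set
  set S : Finset (∀ i ∈ Finset.range N, ℕ) :=
    (Finset.range N).pi (fun i => Finset.Icc (η (i+1)) (η i)) with hS
  have hfac : ∀ μ ∈ T, f μ = ∏ i ∈ Finset.range N, F i (μ i) := by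
    intro μ hμ
    simp only [hT, Finset.mem_filter, Finset.mem_Iic] at hμ
    obtain ⟨hle, hptn, hstrip⟩ := hμ
    have hμsupp : μ.support ⊆ Finset.range N := by
      intro i hi
      simp only [Finsupp.mem_support_iff] at hi
      simp only [Finset.mem_range]
      by_contra hgt
      push_neg at hgt
      have := Finsupp.le_def.mp hle i
      have := hNz i (by omega)
      omega
    have hsize : (μ.sum fun _ v => v) = ∑ i ∈ Finset.range N, μ i :=
      Finsupp.sum_of_support_subset μ hμsupp _ (fun i _ => rfl)
    have hdot : (μ.sum fun j a => a * ν j) = ∑ i ∈ Finset.range N, μ i * ν i :=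
      Finsupp.sum_of_support_subset μ hμsupp _ (fun i _ => by simp)
    have hch2 : (μ.sum fun _ a => a.choose 2) = ∑ i ∈ Finset.range N, (μ i).choose 2 :=
      Finsupp.sum_of_support_subset μ hμsupp _ (fun i _ => rfl)
    have hpsi : (∏ᶠ i : ℕ, Polynomial.aeval (R := ℤ) t (qbp (η i - η (i + 1)) (η i - μ i)))
        = ∏ i ∈ Finset.range N, Bq t (η i - η (i+1)) (η i - μ i) := by
      apply finprod_eq_prod_of_mulSupport_subset
      intro i hi
      simp only [Finset.coe_range, Set.mem_Iio]
      by_contra hgt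
      push_neg at hgt
      have h1 : η i = 0 := hNz i hgt
      have h2 : η (i+1) = 0 := hNz (i+1) (by omega)
      have h3 : μ i = 0 := by have := Finsupp.le_def.mp hle i; omega
      apply hi
      simp [h1, h2, h3, qbp_zero_right]
    have hexp : (-((μ.sum fun j a => a * ν j : ℕ) : ℤ) + ((μ.sum fun _ a => a.choose 2 : ℕ) : ℤ))
        = ∑ i ∈ Finset.range N, (-((μ i * ν i : ℕ) : ℤ) + (((μ i).choose 2 : ℕ) : ℤ)) := by
      rw [hdot, hch2, Finset.sum_add_distrib, Finset.sum_neg_distrib]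
      push_cast
      ring
    simp only [hf, if_pos hle, hpsi, hsize, hexp]
    rw [zpow_sum' t ht, ← Finset.prod_pow_eq_pow_sum]
    rw [← Finset.prod_mul_distrib, ← Finset.prod_mul_distrib]
  rw [Finset.sum_congr rfl hfac]
  -- Step D: sum over T = sum over pi set
  have hbij : ∑ μ ∈ T, ∏ i ∈ Finset.range N, F i (μ i)
      = ∑ g ∈ S, ∏ x ∈ (Finset.range N).attach, F x.1 (g x.1 x.2) := by
    apply Finset.sum_nbij' (i := fun μ => fun i _ => μ i)
      (j := fun g => Finsupp.onFinset (Finset.range N)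
        (fun i => if h : i ∈ Finset.range N then g i h else 0)
        (fun i hi => by by_contra hmem; simp [hmem] at hi))
    · intro μ hμ
      simp only [hT, Finset.mem_filter, Finset.mem_Iic] at hμ
      simp only [hS, Finset.mem_pi]
      intro i hi
      simp only [Finset.mem_Icc]
      exact ⟨hμ.2.2 i, Finsupp.le_def.mp hμ.1 i⟩
    · intro g hg
      simp only [hS, Finset.mem_pi] at hg
      simp only [hT, Finset.mem_filter, Finset.mem_Iic]
      have hgval : ∀ i, (Finsupp.onFinset (Finset.range N)
          (fun i => if h : i ∈ Finset.range N then g i h else 0)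
          (fun i hi => by by_contra hmem; simp [hmem] at hi)) i
          = if h : i ∈ Finset.range N then g i h else 0 := fun i => rfl
      refine ⟨?_, ?_, ?_⟩
      · rw [Finsupp.le_def]
        intro i
        rw [hgval]
        by_cases h : i ∈ Finset.range N
        · rw [dif_pos h]
          exact (Finset.mem_Icc.mp (hg i h)).2
        · rw [dif_neg h]
          exact Nat.zero_le _
      · intro i
        rw [hgval, hgval]
        by_cases h1 : (i+1) ∈ Finset.range N
        · have h0 : i ∈ Finset.range N := by
            simp only [Finset.mem_range] at h1 ⊢; omega
          rw [dif_pos h1, dif_pos h0]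
          have ha := (Finset.mem_Icc.mp (hg (i+1) h1)).2
          have hb := (Finset.mem_Icc.mp (hg i h0)).1
          omega
        · rw [dif_neg h1]
          exact Nat.zero_le _
      · intro i
        rw [hgval]
        by_cases h : i ∈ Finset.range N
        · rw [dif_pos h]
          exact (Finset.mem_Icc.mp (hg i h)).1
        · rw [dif_neg h]
          have : η (i+1) = 0 := by
            apply hNz
            simp only [Finset.mem_range] at h
            omega
          omega
    · intro μ hμ
      simp only [hT, Finset.mem_filter, Finset.mem_Iic] at hμ
      ext i
      simp only [Finsupp.onFinset_apply]
      by_cases h : i ∈ Finset.range N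
      · rw [dif_pos h]
      · rw [dif_neg h]
        simp only [Finset.mem_range] at h
        have := Finsupp.le_def.mp hμ.1 i
        have := hNz i (by omega)
        omega
    · intro g hg
      funext i hi
      simp only [Finsupp.onFinset_apply, dif_pos hi]
    · intro μ hμ
      rw [← Finset.prod_attach (Finset.range N) (fun i => F i (μ i))]
  rw [hbij]
  -- Step E: sum over pi = product of row sums
  rw [← Finset.prod_sum]
  -- Step F: row sums via rowSum
  have hrow : ∀ i ∈ Finset.range N, (∑ m ∈ Finset.Icc (η (i+1)) (η i), F i m)
      = (-1:ℚ)^(η i) * (1-t)^(η i - η (i+1)) *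
        t^(-((η i * ν i : ℕ) : ℤ) + (((η i).choose 2 : ℕ) : ℤ)) *
        (Bq t (ν i - η (i+1)) (η i - η (i+1)) * qFact t (η i - η (i+1))) := by
    intro i _
    exact rowSum t ht (η (i+1)) (η i) (ν i) (hη i) (hcompat i)
  rw [Finset.prod_congr rfl hrow]
  -- Step G: split product and identify with RHS
  have hηsupp : η.support ⊆ Finset.range N := by
    intro i hi
    simp only [Finsupp.mem_support_iff] at hi
    simp only [Finset.mem_range]
    by_contra hgt
    push_neg at hgt
    exact hi (hNz i (by omega))
  have hsize : (η.sum fun _ v => v) = ∑ i ∈ Finset.range N, η i :=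
    Finsupp.sum_of_support_subset η hηsupp _ (fun i _ => rfl)
  have hdot : (η.sum fun j a => a * ν j) = ∑ i ∈ Finset.range N, η i * ν i :=
    Finsupp.sum_of_support_subset η hηsupp _ (fun i _ => by simp)
  have hch2 : (η.sum fun _ a => a.choose 2) = ∑ i ∈ Finset.range N, (η i).choose 2 :=
    Finsupp.sum_of_support_subset η hηsupp _ (fun i _ => rfl)
  have hexp : (-((η.sum fun j a => a * ν j : ℕ) : ℤ) + ((η.sum fun _ a => a.choose 2 : ℕ) : ℤ))
      = ∑ i ∈ Finset.range N, (-((η i * ν i : ℕ) : ℤ) + (((η i).choose 2 : ℕ) : ℤ)) := by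
    rw [hdot, hch2, Finset.sum_add_distrib, Finset.sum_neg_distrib]
    push_cast
    ring
  have htel : ∑ i ∈ Finset.range N, (η i - η (i+1)) = η 0 := by
    rw [tele_sum (fun i => η i) hη N, hNz N le_rfl]
    omega
  have hfinprod : (∏ᶠ i : ℕ, (Polynomial.aeval (R := ℤ) t (qbp (ν i - η (i + 1)) (η i - η (i + 1))) *
        qFact t (η i - η (i + 1))))
      = ∏ i ∈ Finset.range N, (Bq t (ν i - η (i+1)) (η i - η (i+1)) * qFact t (η i - η (i+1))) := by
    apply finprod_eq_prod_of_mulSupport_subset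
    intro i hi
    simp only [Finset.coe_range, Set.mem_Iio]
    by_contra hgt
    push_neg at hgt
    have h1 : η i = 0 := hNz i hgt
    have h2 : η (i+1) = 0 := hNz (i+1) (by omega)
    apply hi
    simp [h1, h2, qbp_zero_right, qFact]
  rw [hfinprod, hsize, hexp, zpow_sum' t ht, ← htel, ← Finset.prod_pow_eq_pow_sum,
    ← Finset.prod_pow_eq_pow_sum]
  rw [← Finset.prod_mul_distrib, ← Finset.prod_mul_distrib, ← Finset.prod_mul_distrib]

/-- Lemma on the `ψ`-sum. -/
theorem statement2 (η ν : ℕ →₀ ℕ) (hη : IsPtn η) (hν : IsPtn ν)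
    (hcompat : ∀ i, η (i + 1) ≤ ν i) (t : ℚ) (ht : t ≠ 0) :
    (∑ᶠ μ ∈ {μ : ℕ →₀ ℕ | IsPtn μ ∧ μ ≤ η},
        (-1 : ℚ) ^ ptnSize μ * t ^ (-(dotP μ ν : ℤ) + (ch2 μ : ℤ)) * psiQ t η μ) =
      (-1 : ℚ) ^ ptnSize η * (1 - t) ^ (η 0) * t ^ (-(dotP η ν : ℤ) + (ch2 η : ℤ)) *
        ∏ᶠ i : ℕ,
          (Polynomial.aeval t (qbp (ν i - η (i + 1)) (η i - η (i + 1))) *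
            qFact t (η i - η (i + 1))) := by
  have h := statement2' η ν hη hν hcompat t ht
  simp only [ptnSize, dotP, ch2, psiQ]
  exact h
end

section
/- Let n be a positive integer and let I be the (finite) set of all partitions of the integers 0, 1, …, n−1. The square matrix over the field ℚ(t) of rational functions, with rows and columns indexed by I, whose (μ,ν) entry is (−1)^{|μ|} t^{−μ·ν + Σ_{j≥1} C(μ_j,2)}, has nonzero determinant. -/
open Matrix Module Polynomial

attribute [local instance] Classical.propDecidable

lemma two_mul_mul_le (a b : ℕ) : 2 * (a * b) ≤ a * a + b * b := by
  zify; nlinarith [sq_nonneg ((a : ℤ) - b)]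

lemma two_mul_mul_lt {a b : ℕ} (h : a ≠ b) : 2 * (a * b) < a * a + b * b := by
  have h' : ((a : ℤ) - b) ≠ 0 := sub_ne_zero.mpr (by exact_mod_cast h)
  zify; nlinarith [sq_pos_of_ne_zero h']

lemma dotP_eq_sum {S : Finset ℕ} {μ : ℕ →₀ ℕ} (h : μ.support ⊆ S) (ν : ℕ →₀ ℕ) :
    dotP μ ν = ∑ j ∈ S, μ j * ν j := by
  rw [dotP, Finsupp.sum]
  exact Finset.sum_subset h fun j _ hj => by
    simp [Finsupp.notMem_support_iff.mp hj]

lemma dot_le {S : Finset ℕ} {μ ν : ℕ →₀ ℕ} (hμ : μ.support ⊆ S) (hν : ν.support ⊆ S) :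
    2 * dotP μ ν ≤ dotP μ μ + dotP ν ν := by
  rw [dotP_eq_sum hμ, dotP_eq_sum hμ, dotP_eq_sum hν, Finset.mul_sum,
    ← Finset.sum_add_distrib]
  exact Finset.sum_le_sum fun j _ => two_mul_mul_le _ _

lemma dot_lt {S : Finset ℕ} {μ ν : ℕ →₀ ℕ} (hμ : μ.support ⊆ S) (hν : ν.support ⊆ S)
    (hne : μ ≠ ν) : 2 * dotP μ ν < dotP μ μ + dotP ν ν := by
  obtain ⟨j, hj⟩ : ∃ j, μ j ≠ ν j := by
    by_contra h; push_neg at h; exact hne (Finsupp.ext h)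
  have hjS : j ∈ S := by
    rcases Nat.eq_zero_or_pos (μ j) with h0 | h0
    · exact hν (Finsupp.mem_support_iff.mpr (by omega))
    · exact hμ (Finsupp.mem_support_iff.mpr (by omega))
  rw [dotP_eq_sum hμ, dotP_eq_sum hμ, dotP_eq_sum hν, Finset.mul_sum,
    ← Finset.sum_add_distrib]
  exact Finset.sum_lt_sum (fun k _ => two_mul_mul_le _ _)
    ⟨j, hjS, two_mul_mul_lt hj⟩

lemma prod_zpow'' {K : Type*} [Field K] {x : K} (hx : x ≠ 0) {α : Type*} (s : Finset α)
    (f : α → ℤ) : ∏ i ∈ s, x ^ f i = x ^ (∑ i ∈ s, f i) := by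
  induction s using Finset.cons_induction with
  | empty => simp
  | cons a s ha ih => rw [Finset.prod_cons, Finset.sum_cons, ih, zpow_add₀ hx]
/-- The matrix over `ℚ(t)`, with rows and columns indexed by the set `I`
of partitions of the integers `0, 1, …, n-1`, whose `(μ,ν)` entry is
`(-1)^{|μ|} t^{-μ·ν + ∑_j C(μ_j,2)}`, has nonzero determinant. -/
theorem statement4 (n : ℕ) (hn : 0 < n) (I : Finset (ℕ →₀ ℕ))
    (hI : ∀ μ : ℕ →₀ ℕ, μ ∈ I ↔ (IsPtn μ ∧ ptnSize μ < n)) :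
    Matrix.det (Matrix.of fun μ ν : I =>
        (-1 : RatFunc ℚ) ^ ptnSize μ.1 *
          (RatFunc.X : RatFunc ℚ) ^ (-(dotP μ.1 ν.1 : ℤ) + (ch2 μ.1 : ℤ))) ≠ 0 := by
  classical
  set K := RatFunc ℚ
  set S : Finset ℕ := I.sup Finsupp.support with hS
  have hsub : ∀ μ : ↥I, (μ : ℕ →₀ ℕ).support ⊆ S := fun μ => Finset.le_sup μ.2
  set D : Equiv.Perm ↥I → ℕ := fun σ => ∑ μ : ↥I, dotP ((σ μ) : ℕ →₀ ℕ) (μ : ℕ →₀ ℕ)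
    with hD
  have hD1 : D 1 = ∑ μ : ↥I, dotP (μ : ℕ →₀ ℕ) (μ : ℕ →₀ ℕ) := by simp [hD]
  have hDlt : ∀ σ : Equiv.Perm ↥I, σ ≠ 1 → D σ < D 1 := by
    intro σ hσ
    obtain ⟨μ₀, hμ₀⟩ : ∃ μ : ↥I, σ μ ≠ μ := by
      by_contra h; push_neg at h; exact hσ (Equiv.ext h)
    have hre : ∑ μ : ↥I, dotP ((σ μ) : ℕ →₀ ℕ) ((σ μ) : ℕ →₀ ℕ) = D 1 := by
      rw [hD1]; exact Equiv.sum_comp σ (fun μ : ↥I => dotP (μ : ℕ →₀ ℕ) (μ : ℕ →₀ ℕ))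
    have h2 : 2 * D σ < D 1 + D 1 := by
      calc 2 * D σ = ∑ μ : ↥I, 2 * dotP ((σ μ) : ℕ →₀ ℕ) (μ : ℕ →₀ ℕ) := by
            rw [hD, Finset.mul_sum]
        _ < ∑ μ : ↥I, (dotP ((σ μ) : ℕ →₀ ℕ) ((σ μ) : ℕ →₀ ℕ)
              + dotP (μ : ℕ →₀ ℕ) (μ : ℕ →₀ ℕ)) :=
            Finset.sum_lt_sum (fun μ _ => dot_le (hsub _) (hsub _))
              ⟨μ₀, Finset.mem_univ _,
                dot_lt (hsub _) (hsub _) (fun h => hμ₀ (Subtype.ext h))⟩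
        _ = D 1 + D 1 := by rw [Finset.sum_add_distrib, hre, hD1]
    omega
  have hDle : ∀ σ : Equiv.Perm ↥I, D σ ≤ D 1 := by
    intro σ
    rcases eq_or_ne σ 1 with rfl | h
    · exact le_rfl
    · exact (hDlt σ h).le
  set N : ℕ := ∑ μ : ↥I, ptnSize (μ : ℕ →₀ ℕ) with hN
  set Ct : ℕ := ∑ μ : ↥I, ch2 (μ : ℕ →₀ ℕ) with hCt
  have hXne : (RatFunc.X : K) ≠ 0 := RatFunc.X_ne_zero
  -- per-permutation term computation
  have hterm : ∀ σ : Equiv.Perm ↥I,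
      (∏ μ : ↥I, ((-1 : K) ^ ptnSize ((σ μ) : ℕ →₀ ℕ) *
        (RatFunc.X : K) ^ (-(dotP ((σ μ) : ℕ →₀ ℕ) (μ : ℕ →₀ ℕ) : ℤ)
          + (ch2 ((σ μ) : ℕ →₀ ℕ) : ℤ))))
      = (-1 : K) ^ N * (RatFunc.X : K) ^ ((Ct : ℤ) - (D σ : ℤ)) := by
    intro σ
    rw [Finset.prod_mul_distrib, Finset.prod_pow_eq_pow_sum, prod_zpow'' hXne]
    congr 1
    · congr 1
      rw [hN]; exact Equiv.sum_comp σ (fun μ : ↥I => ptnSize (μ : ℕ →₀ ℕ))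
    · congr 1
      rw [Finset.sum_add_distrib]
      have h1 : ∑ μ : ↥I, (ch2 ((σ μ) : ℕ →₀ ℕ) : ℤ) = (Ct : ℤ) := by
        rw [hCt, Nat.cast_sum]
        exact Equiv.sum_comp σ (fun μ : ↥I => (ch2 (μ : ℕ →₀ ℕ) : ℤ))
      have h2 : ∑ μ : ↥I, (-(dotP ((σ μ) : ℕ →₀ ℕ) (μ : ℕ →₀ ℕ) : ℤ)) = -(D σ : ℤ) := by
        rw [hD, Nat.cast_sum, Finset.sum_neg_distrib]
      rw [h1, h2]; ring
  intro hdet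
  -- the polynomial whose image is det * X ^ D 1
  set n0 : Equiv.Perm ↥I → ℕ := fun σ => Ct + D 1 - D σ with hn0
  set q : Polynomial ℚ := ∑ σ : Equiv.Perm ↥I,
      Polynomial.C (((-1) ^ N * (Equiv.Perm.sign σ : ℤ) : ℤ) : ℚ) * Polynomial.X ^ n0 σ
    with hq
  have hmap : algebraMap (Polynomial ℚ) K q =
      (Matrix.det (Matrix.of fun μ ν : I =>
        (-1 : K) ^ ptnSize μ.1 *
          (RatFunc.X : K) ^ (-(dotP μ.1 ν.1 : ℤ) + (ch2 μ.1 : ℤ)))) *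
        (RatFunc.X : K) ^ ((D 1 : ℤ)) := by
    rw [Matrix.det_apply', Finset.sum_mul, hq, map_sum]
    refine Finset.sum_congr rfl fun σ _ => ?_
    rw [_root_.map_mul, map_pow, RatFunc.algebraMap_X]
    have hent : (∏ μ : ↥I, (Matrix.of fun μ ν : I =>
        (-1 : K) ^ ptnSize μ.1 *
          (RatFunc.X : K) ^ (-(dotP μ.1 ν.1 : ℤ) + (ch2 μ.1 : ℤ))) (σ μ) μ)
        = (-1 : K) ^ N * (RatFunc.X : K) ^ ((Ct : ℤ) - (D σ : ℤ)) := by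
      rw [← hterm σ]; rfl
    rw [hent]
    have hexp : (RatFunc.X : K) ^ ((Ct : ℤ) - (D σ : ℤ)) * (RatFunc.X : K) ^ ((D 1 : ℤ))
        = (RatFunc.X : K) ^ (n0 σ) := by
      rw [← zpow_natCast (RatFunc.X : K) (n0 σ), ← zpow_add₀ hXne]
      congr 1
      have := hDle σ
      rw [hn0]; push_cast [Nat.cast_sub (by omega : D σ ≤ Ct + D 1)]; ring
    have hC : (algebraMap (Polynomial ℚ) K)
        (Polynomial.C (((-1) ^ N * (Equiv.Perm.sign σ : ℤ) : ℤ) : ℚ))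
        = ((Equiv.Perm.sign σ : ℤ) : K) * (-1 : K) ^ N := by
      rw [RatFunc.algebraMap_C]
      rw [eq_ratCast (RatFunc.C : ℚ →+* K)]
      push_cast
      norm_cast
      rw [mul_comm]
      exact Int.cast_mul _ _
    rw [hC, ← hexp]
    ring
  rw [hdet, zero_mul] at hmap
  have hq0 : q = 0 := by
    by_contra h
    exact RatFunc.algebraMap_ne_zero h hmap
  have hcoeff : q.coeff Ct = ((-1) ^ N : ℚ) := by
    rw [hq, Polynomial.finset_sum_coeff]
    rw [Finset.sum_eq_single (1 : Equiv.Perm ↥I)]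
    · rw [Polynomial.coeff_C_mul, Polynomial.coeff_X_pow, if_pos (by simp [hn0])]
      simp
    · intro σ _ hσ
      have hlt := hDlt σ hσ
      have : Ct ≠ n0 σ := by simp only [hn0]; omega
      rw [Polynomial.coeff_C_mul, Polynomial.coeff_X_pow, if_neg this, mul_zero]
    · intro h; exact absurd (Finset.mem_univ _) h
  rw [hq0] at hcoeff
  simp at hcoeff
  exact absurd hcoeff (by positivity)
end

section
/- Let q be a prime power, n a positive integer, Δ ∈ M_n(𝔽_q), and let W ⊆ W' be Δ-invariant subspaces of 𝔽_q^n with d = dim W' − dim W. Then for every integer 0 ≤ a ≤ d, the number of Δ-invariant subspaces U with W ⊆ U ⊆ W' and dim U = dim W + a is equal to the number of Δ-invariant subspaces U with W ⊆ U ⊆ W' and dim U = dim W + (d − a). -/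
open Matrix Module Polynomial

attribute [local instance] Classical.propDecidable

section aux0
open Polynomial Module

section Sim
variable {F : Type} [Field F] {V W Z : Type} [AddCommGroup V] [Module F V]
  [AddCommGroup W] [Module F W] [AddCommGroup Z] [Module F Z]

/-- Two endomorphisms are similar. -/
def Sim (f : V →ₗ[F] V) (g : W →ₗ[F] W) : Prop :=
  ∃ e : V ≃ₗ[F] W, ∀ v, e (f v) = g (e v)

lemma Sim.refl (f : V →ₗ[F] V) : Sim f f := ⟨LinearEquiv.refl F V, fun _ => rfl⟩

lemma sim_symm_aux {f : V →ₗ[F] V} {g : W →ₗ[F] W} (e : V ≃ₗ[F] W)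
    (he : ∀ v, e (f v) = g (e v)) : ∀ w, e.symm (g w) = f (e.symm w) := fun w => by
  conv_lhs => rw [← e.apply_symm_apply w, ← he, e.symm_apply_apply]

lemma Sim.symm {f : V →ₗ[F] V} {g : W →ₗ[F] W} (h : Sim f g) : Sim g f := by
  obtain ⟨e, he⟩ := h
  exact ⟨e.symm, sim_symm_aux e he⟩

lemma Sim.trans {f : V →ₗ[F] V} {g : W →ₗ[F] W} {h : Z →ₗ[F] Z}
    (h1 : Sim f g) (h2 : Sim g h) : Sim f h := by
  obtain ⟨e1, he1⟩ := h1; obtain ⟨e2, he2⟩ := h2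
  exact ⟨e1.trans e2, fun v => by simp [he1, he2]⟩

lemma Sim.dualMap {f : V →ₗ[F] V} {g : W →ₗ[F] W} (h : Sim f g) :
    Sim g.dualMap f.dualMap := by
  obtain ⟨e, he⟩ := h
  refine ⟨e.dualMap, fun φ => ?_⟩
  ext v
  simp only [LinearEquiv.dualMap_apply, LinearMap.dualMap_apply]
  rw [he]

lemma sim_map_aux (f : V →ₗ[F] V) (g : W →ₗ[F] W) (e : V ≃ₗ[F] W)
    (he : ∀ v, e (f v) = g (e v)) (U : Submodule F V) (hU : U.map f ≤ U) :
    (U.map (e : V →ₗ[F] W)).map g ≤ U.map (e : V →ₗ[F] W) := by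
  rintro x ⟨y, ⟨u, hu, rfl⟩, rfl⟩
  exact ⟨f u, hU ⟨u, hu, rfl⟩, he u⟩

/-- similarity transports counts of invariant subspaces of given dimension -/
lemma Sim.card_eq {f : V →ₗ[F] V} {g : W →ₗ[F] W} (h : Sim f g) (a : ℕ) :
    Nat.card {U : Submodule F V // U.map f ≤ U ∧ finrank F U = a} =
      Nat.card {U : Submodule F W // U.map g ≤ U ∧ finrank F U = a} := by
  obtain ⟨e, he⟩ := h
  refine Nat.card_congr (Equiv.mk
    (fun U => ⟨(U : Submodule F V).map (e : V →ₗ[F] W), sim_map_aux f g e he U.1 U.2.1,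
      by rw [LinearEquiv.finrank_map_eq]; exact U.2.2⟩)
    (fun U => ⟨(U : Submodule F W).map (e.symm : W →ₗ[F] V),
      sim_map_aux g f e.symm (sim_symm_aux e he) U.1 U.2.1,
      by rw [LinearEquiv.finrank_map_eq]; exact U.2.2⟩) ?_ ?_) <;>
  · rintro ⟨U, hU⟩
    apply Subtype.ext
    simp only
    rw [← Submodule.map_comp]; simp

end Sim

end aux0

section aux1
open Polynomial Module

variable {F : Type} [Field F] {V : Type} [AddCommGroup V] [Module F V]

lemma finrank_dualAnnihilator [FiniteDimensional F V] (U : Submodule F V) :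
    finrank F U.dualAnnihilator = finrank F V - finrank F U := by
  have h := Subspace.finrank_add_finrank_dualCoannihilator_eq U.dualAnnihilator
  rw [Subspace.dualAnnihilator_dualCoannihilator_eq] at h
  omega

lemma card_dual (f : V →ₗ[F] V) [FiniteDimensional F V] (a : ℕ) (ha : a ≤ finrank F V) :
    Nat.card {U : Submodule F V // U.map f ≤ U ∧ finrank F U = a} =
      Nat.card {U : Submodule F (Dual F V) //
        U.map f.dualMap ≤ U ∧ finrank F U = finrank F V - a} := by
  refine Nat.card_congr (Equiv.mk (fun U => ⟨U.1.dualAnnihilator, ?_, ?_⟩)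
    (fun U => ⟨U.1.dualCoannihilator, ?_, ?_⟩) ?_ ?_)
  · rintro φ ⟨ψ, hψ, rfl⟩
    simp only [SetLike.mem_coe, Submodule.mem_dualAnnihilator] at hψ ⊢
    intro w hw
    exact hψ (f w) (U.2.1 ⟨w, hw, rfl⟩)
  · rw [finrank_dualAnnihilator, U.2.2]
  · rintro x ⟨y, hy, rfl⟩
    simp only [SetLike.mem_coe, Submodule.mem_dualCoannihilator] at hy ⊢
    intro φ hφ
    exact hy (f.dualMap φ) (U.2.1 ⟨φ, hφ, rfl⟩)
  · have h := Subspace.finrank_add_finrank_dualCoannihilator_eq U.1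
    have := U.2.2
    omega
  · rintro ⟨U, hU⟩
    exact Subtype.ext (by simpa using Subspace.dualAnnihilator_dualCoannihilator_eq)
  · rintro ⟨U, hU⟩
    exact Subtype.ext (by simpa using Subspace.dualCoannihilator_dualAnnihilator_eq)

end aux1

section aux2
open Polynomial Module

variable {F : Type} [Field F]

/-- multiplication by X as an F-linear endomorphism of an F[X]-module -/
noncomputable def mulX (F : Type) [Field F] (M : Type) [AddCommGroup M] [Module F M]
    [Module F[X] M] [IsScalarTower F F[X] M] [SMulCommClass F[X] F M] : M →ₗ[F] M where
  toFun m := (X : F[X]) • m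
  map_add' := smul_add _
  map_smul' c m := smul_comm (X : F[X]) c m

lemma mulX_apply (M : Type) [AddCommGroup M] [Module F M]
    [Module F[X] M] [IsScalarTower F F[X] M] [SMulCommClass F[X] F M] (m : M) :
    mulX F M m = (X : F[X]) • m := rfl

section cyclic
variable (g : F[X])

noncomputable local instance (g : F[X]) : Module F[X] (AdjoinRoot g) :=
  inferInstanceAs (Module F[X] (F[X] ⧸ (F[X] ∙ g)))
local instance (g : F[X]) : IsScalarTower F F[X] (AdjoinRoot g) :=
  inferInstanceAs (IsScalarTower F F[X] (F[X] ⧸ (F[X] ∙ g)))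
local instance (g : F[X]) : SMulCommClass F[X] F (AdjoinRoot g) :=
  inferInstanceAs (SMulCommClass F[X] F (F[X] ⧸ (F[X] ∙ g)))

lemma adjoinRoot_smul (u : AdjoinRoot g) :
    (X : F[X]) • u = AdjoinRoot.root g * u := by
  obtain ⟨q, rfl⟩ := AdjoinRoot.mk_surjective u
  show (X : F[X]) • AdjoinRoot.mk g q = _
  rw [AdjoinRoot.root, ← _root_.map_mul]
  rfl

/-- the self-duality pairing map on a cyclic module -/
noncomputable def pairE (hg : g.Monic) :
    AdjoinRoot g →ₗ[F] Dual F (AdjoinRoot g) where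
  toFun u := ((lcoeff F (g.natDegree - 1)).comp (AdjoinRoot.modByMonicHom hg)).comp
      (LinearMap.mul F (AdjoinRoot g) u)
  map_add' u v := by ext w; simp [add_mul]
  map_smul' c u := by ext w; simp [smul_mul_assoc]

lemma pairE_apply (hg : g.Monic) (u v : AdjoinRoot g) :
    pairE g hg u v = (AdjoinRoot.modByMonicHom hg (u * v)).coeff (g.natDegree - 1) := rfl

lemma pairE_injective (hg : g.Monic) : Function.Injective (pairE g hg) := by
  rw [injective_iff_map_eq_zero]
  intro u hu
  by_contra hne
  set q := AdjoinRoot.modByMonicHom hg u with hqdef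
  have hmkq : AdjoinRoot.mk g q = u := AdjoinRoot.mk_leftInverse hg u
  have hq0 : q ≠ 0 := by
    intro h; rw [h, map_zero] at hmkq; exact hne hmkq.symm
  have hdeg : q.degree < g.degree := by
    obtain ⟨q0, rfl⟩ := AdjoinRoot.mk_surjective u
    rw [hqdef, AdjoinRoot.modByMonicHom_mk hg q0]
    exact degree_modByMonic_lt q0 hg
  have hnd : q.natDegree < g.natDegree := natDegree_lt_natDegree hq0 hdeg
  set k := g.natDegree - 1 - q.natDegree with hk
  have happ : pairE g hg u (AdjoinRoot.mk g (X ^ k)) = 0 := by rw [hu]; rfl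
  rw [pairE_apply, ← hmkq, ← _root_.map_mul, AdjoinRoot.modByMonicHom_mk] at happ
  have hqk0 : q * X ^ k ≠ 0 := mul_ne_zero hq0 (pow_ne_zero _ X_ne_zero)
  have hdeg2 : (q * X ^ k).degree < g.degree := by
    rw [degree_eq_natDegree hg.ne_zero, ← natDegree_lt_iff_degree_lt hqk0]
    rw [natDegree_mul hq0 (pow_ne_zero _ X_ne_zero), natDegree_X_pow]
    omega
  rw [(modByMonic_eq_self_iff hg).mpr hdeg2] at happ
  have hsum : g.natDegree - 1 = q.natDegree + k := by omega
  rw [hsum, coeff_mul_X_pow] at happ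
  exact leadingCoeff_ne_zero.mpr hq0 happ

lemma pairE_intertwine (hg : g.Monic) (u : AdjoinRoot g) :
    pairE g hg ((X : F[X]) • u)
      = LinearMap.dualMap (mulX F (AdjoinRoot g)) (pairE g hg u) := by
  ext w
  rw [LinearMap.dualMap_apply, pairE_apply, pairE_apply, mulX_apply,
    adjoinRoot_smul, adjoinRoot_smul]
  congr 1
  ring

end cyclic

end aux2

section part4
open Polynomial Module
variable {F : Type} [Field F]

noncomputable local instance inst_s5 (g : F[X]) : Module F[X] (AdjoinRoot g) :=
  inferInstanceAs (Module F[X] (F[X] ⧸ (F[X] ∙ g)))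
local instance inst_s5_2 (g : F[X]) : IsScalarTower F F[X] (AdjoinRoot g) :=
  inferInstanceAs (IsScalarTower F F[X] (F[X] ⧸ (F[X] ∙ g)))
local instance inst_s5_3 (g : F[X]) : SMulCommClass F[X] F (AdjoinRoot g) :=
  inferInstanceAs (SMulCommClass F[X] F (F[X] ⧸ (F[X] ∙ g)))

lemma sim_cyclic_monic (g : F[X]) (hg : g.Monic) :
    Sim (mulX F (AdjoinRoot g)) (mulX F (AdjoinRoot g)).dualMap := by
  haveI : FiniteDimensional F (AdjoinRoot g) :=
    Module.Finite.of_basis (AdjoinRoot.powerBasis hg.ne_zero).basis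
  have hdim : finrank F (AdjoinRoot g) = finrank F (Dual F (AdjoinRoot g)) :=
    (Subspace.dual_finrank_eq).symm
  refine ⟨LinearMap.linearEquivOfInjective (pairE g hg) (pairE_injective g hg) hdim,
    fun u => ?_⟩
  simp only [LinearMap.linearEquivOfInjective_apply]
  exact pairE_intertwine g hg u

lemma sim_of_polyEquiv {M N : Type} [AddCommGroup M] [Module F M] [Module F[X] M]
    [IsScalarTower F F[X] M] [SMulCommClass F[X] F M]
    [AddCommGroup N] [Module F N] [Module F[X] N]
    [IsScalarTower F F[X] N] [SMulCommClass F[X] F N]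
    (e : M ≃ₗ[F[X]] N) : Sim (mulX F M) (mulX F N) :=
  ⟨e.restrictScalars F, fun m => map_smul e (X : F[X]) m⟩

lemma Sim.conj_dual {V W : Type} [AddCommGroup V] [Module F V] [AddCommGroup W] [Module F W]
    {f : V →ₗ[F] V} {g : W →ₗ[F] W} (hfg : Sim f g) (hg : Sim g g.dualMap) :
    Sim f f.dualMap := hfg.trans (hg.trans hfg.dualMap)

lemma sim_cyclic (g : F[X]) (hg : g ≠ 0) :
    Sim (mulX F (F[X] ⧸ (F[X] ∙ g))) (mulX F (F[X] ⧸ (F[X] ∙ g))).dualMap := by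
  set h := g * C g.leadingCoeff⁻¹ with hh
  have hm : h.Monic := monic_mul_leadingCoeff_inv hg
  have hu : IsUnit (C g.leadingCoeff⁻¹) :=
    Polynomial.isUnit_C.mpr (isUnit_iff_ne_zero.mpr (inv_ne_zero (leadingCoeff_ne_zero.mpr hg)))
  have hassoc : Associated g h := ⟨hu.unit, by rw [IsUnit.unit_spec]⟩
  have hspan : (F[X] ∙ g) = (F[X] ∙ h) := Ideal.span_singleton_eq_span_singleton.mpr hassoc
  have e1 : (F[X] ⧸ (F[X] ∙ g)) ≃ₗ[F[X]] (F[X] ⧸ (F[X] ∙ h)) :=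
    Submodule.quotEquivOfEq _ _ hspan
  exact (sim_of_polyEquiv e1).conj_dual (sim_cyclic_monic h hm)

lemma sim_pi {ι : Type} [Fintype ι] [DecidableEq ι] (C : ι → Type)
    [∀ i, AddCommGroup (C i)] [∀ i, Module F (C i)]
    (g : ∀ i, C i →ₗ[F] C i) (hg : ∀ i, Sim (g i) (g i).dualMap) :
    Sim (LinearMap.pi (fun i => (g i).comp (LinearMap.proj i)))
      (LinearMap.pi (fun i => (g i).comp (LinearMap.proj i))).dualMap := by
  choose e he using hg
  let E1 : (∀ i, C i) ≃ₗ[F] ∀ i, Dual F (C i) := LinearEquiv.piCongrRight e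
  let E2 : (∀ i, Dual F (C i)) ≃ₗ[F] Dual F (∀ i, C i) := LinearMap.lsum F C F
  refine ⟨E1.trans E2, fun v => ?_⟩
  refine LinearMap.ext fun w => ?_
  simp only [LinearMap.dualMap_apply, LinearEquiv.trans_apply, E2, E1,
    LinearMap.lsum_apply, LinearMap.coe_sum, LinearMap.coe_comp, Function.comp_apply,
    Finset.sum_apply, LinearMap.proj_apply, LinearEquiv.piCongrRight_apply, LinearMap.pi_apply]
  refine Finset.sum_congr rfl fun i _ => ?_
  have := he i (v i)
  have h2 := congrFun (congrArg DFunLike.coe this) (w i)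
  simpa using h2

end part4

section part5
open Polynomial Module
open scoped DirectSum
variable {F : Type} [Field F]

lemma sim_dualMap {V : Type} [AddCommGroup V] [Module F V] [FiniteDimensional F V]
    (f : V →ₗ[F] V) : Sim f f.dualMap := by
  classical
  -- move to the F[X]-module M = AEval' f
  have s0 : Sim f (mulX F (Module.AEval' f)) := by
    refine ⟨(Module.AEval'.of f : V ≃ₗ[F] Module.AEval' f), fun v => ?_⟩
    exact (Module.AEval'.X_smul_of f v).symm
  -- M is finite and torsion over F[X]
  have htor : Module.IsTorsion F[X] (Module.AEval' f) := by
    intro m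
    refine ⟨⟨LinearMap.charpoly f,
      mem_nonZeroDivisors_of_ne_zero f.charpoly_monic.ne_zero⟩, ?_⟩
    rw [Submonoid.smul_def]
    apply (Module.AEval'.of f).symm.injective
    show (Module.AEval'.of f).symm _ = (Module.AEval'.of f).symm 0
    rw [Module.AEval.of_symm_smul, LinearMap.aeval_self_charpoly]
    simp
  obtain ⟨ι, hfin, p, hp, ee, ⟨l⟩⟩ := Module.equiv_directSum_of_isTorsion htor
  haveI := hfin
  -- transfer to the direct sum
  have s1 := sim_of_polyEquiv (F := F) l
  -- transfer to the product
  have s2 :=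
    sim_of_polyEquiv (F := F) (M := ⨁ i : ι, F[X] ⧸ (F[X] ∙ p i ^ ee i))
      (N := ∀ i : ι, F[X] ⧸ (F[X] ∙ p i ^ ee i)) (DirectSum.linearEquivFunOnFintype F[X] ι _)
  -- the product is a pi-map
  have hpi : mulX F (∀ i : ι, F[X] ⧸ (F[X] ∙ p i ^ ee i)) =
      LinearMap.pi (fun i => (mulX F (F[X] ⧸ (F[X] ∙ p i ^ ee i))).comp
        (LinearMap.proj i)) := by
    refine LinearMap.ext fun v => ?_
    rfl
  have s3 : Sim (mulX F (∀ i : ι, F[X] ⧸ (F[X] ∙ p i ^ ee i)))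
      (mulX F (∀ i : ι, F[X] ⧸ (F[X] ∙ p i ^ ee i))).dualMap := by
    rw [hpi]
    exact sim_pi _ _ (fun i => sim_cyclic (p i ^ ee i) (pow_ne_zero _ (hp i).ne_zero))
  exact (s0.trans (s1.trans s2)).conj_dual s3

end part5

section part6
open Polynomial Module

variable {F : Type} [Field F]

lemma key_count {V : Type} [AddCommGroup V] [Module F V] [FiniteDimensional F V]
    (f : V →ₗ[F] V) (a : ℕ) (ha : a ≤ finrank F V) :
    Nat.card {U : Submodule F V // U.map f ≤ U ∧ finrank F U = a} =
      Nat.card {U : Submodule F V // U.map f ≤ U ∧ finrank F U = finrank F V - a} := by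
  rw [card_dual f a ha]
  exact ((sim_dualMap f).card_eq _).symm

lemma card_interval {E : Type} [AddCommGroup E] [Module F E] [FiniteDimensional F E]
    (f : E →ₗ[F] E) (W W' : Submodule F E) (hWW' : W ≤ W')
    (hW : W.map f ≤ W) (hW' : W'.map f ≤ W') (b : ℕ)
    (hres : ∀ x ∈ W', f x ∈ W')
    (hcomap : W.comap W'.subtype ≤ (W.comap W'.subtype).comap (f.restrict hres)) :
    Nat.card {U : Submodule F E //
        U.map f ≤ U ∧ W ≤ U ∧ U ≤ W' ∧ finrank F U = finrank F W + b} =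
      Nat.card {S : Submodule F (W' ⧸ (W.comap W'.subtype)) //
        S.map (Submodule.mapQ _ _ (f.restrict hres) hcomap) ≤ S ∧ finrank F S = b} := by
  set W₀ : Submodule F W' := W.comap W'.subtype with hW₀def
  set g : W' →ₗ[F] W' := f.restrict hres with hgdef
  set Q := Submodule.mapQ W₀ W₀ g hcomap with hQdef
  have hrank : ∀ P : Submodule F W', W₀ ≤ P →
      finrank F (P.map W'.subtype) = finrank F W + finrank F (P.map W₀.mkQ) := by
    intro P hP
    have h1 : finrank F (P.map W'.subtype) = finrank F P :=
      Submodule.finrank_map_subtype_eq W' P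
    have rn := LinearMap.finrank_range_add_finrank_ker (W₀.mkQ.comp P.subtype)
    have hrange : LinearMap.range (W₀.mkQ.comp P.subtype) = P.map W₀.mkQ := by
      rw [LinearMap.range_comp, Submodule.range_subtype]
    have hker : LinearMap.ker (W₀.mkQ.comp P.subtype) = W₀.comap P.subtype := by
      rw [LinearMap.ker_comp, Submodule.ker_mkQ]
    have e1 : finrank F (W₀.comap P.subtype) = finrank F W₀ :=
      (Submodule.comapSubtypeEquivOfLe hP).finrank_eq
    have e2 : finrank F W₀ = finrank F W :=
      (Submodule.comapSubtypeEquivOfLe hWW').finrank_eq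
    rw [hrange, hker, e1, e2] at rn
    omega
  refine Nat.card_congr (Equiv.mk (fun U => ?_) (fun S => ?_) ?_ ?_)
  · -- forward: U to S
    refine ⟨(U.1.comap W'.subtype).map W₀.mkQ, ?_, ?_⟩
    · rintro s ⟨t, ⟨u, hu, rfl⟩, rfl⟩
      refine ⟨g u, ?_, rfl⟩
      show (g u : E) ∈ U.1
      exact U.2.1 ⟨u.1, hu, rfl⟩
    · have hP : W₀ ≤ U.1.comap W'.subtype := fun x hx => U.2.2.1 hx
      have := hrank _ hP
      have hUeq : (U.1.comap W'.subtype).map W'.subtype = U.1 := by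
        rw [Submodule.map_comap_subtype]
        exact inf_eq_right.mpr U.2.2.2.1
      rw [hUeq] at this
      exact Nat.add_left_cancel (this.symm.trans U.2.2.2.2)
  · -- backward: S to U
    refine ⟨(S.1.comap W₀.mkQ).map W'.subtype, ?_, ?_, ?_, ?_⟩
    · rintro x ⟨y, ⟨u, hu, rfl⟩, rfl⟩
      refine ⟨g u, ?_, rfl⟩
      show W₀.mkQ (g u) ∈ S.1
      exact S.2.1 ⟨_, hu, rfl⟩
    · intro x hx
      refine ⟨⟨x, hWW' hx⟩, ?_, rfl⟩
      show W₀.mkQ _ ∈ S.1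
      have : (⟨x, hWW' hx⟩ : W') ∈ W₀ := hx
      rw [show W₀.mkQ ⟨x, hWW' hx⟩ = 0 from (Submodule.Quotient.mk_eq_zero W₀).mpr this]
      exact S.1.zero_mem
    · exact Submodule.map_subtype_le _ _
    · have hP : W₀ ≤ S.1.comap W₀.mkQ := by
        intro x hx
        show W₀.mkQ x ∈ S.1
        rw [show W₀.mkQ x = 0 from (Submodule.Quotient.mk_eq_zero W₀).mpr hx]
        exact S.1.zero_mem
      have := hrank _ hP
      rw [Submodule.map_comap_eq_of_surjective (W₀.mkQ_surjective) S.1] at this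
      rw [this, S.2.2]
  · -- left inverse (ambient side roundtrip)
    rintro ⟨U, hU⟩
    apply Subtype.ext
    simp only
    rw [Submodule.comap_map_eq, Submodule.ker_mkQ]
    have hP : W₀ ≤ U.comap W'.subtype := fun x hx => hU.2.1 hx
    rw [sup_eq_left.mpr hP, Submodule.map_comap_subtype]
    exact inf_eq_right.mpr hU.2.2.1
  · -- right inverse (quotient side roundtrip)
    rintro ⟨S, hS⟩
    apply Subtype.ext
    simp only
    rw [Submodule.comap_map_eq_of_injective (Submodule.injective_subtype W'),
      Submodule.map_comap_eq_of_surjective (W₀.mkQ_surjective)]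

end part6


set_option synthInstance.maxHeartbeats 1000000 in
/-- For `Δ`-invariant subspaces `W ⊆ W'` with `d = dim W' - dim W`, and
`0 ≤ a ≤ d`, the number of intermediate `Δ`-invariant subspaces of dimension `dim W + a`
equals the number of those of dimension `dim W + (d - a)`. -/
theorem statement5 (q : ℕ) (hq : IsPrimePow q) (n : ℕ) (hn : 0 < n)
    (F : Type) [Field F] [Fintype F] (hF : Fintype.card F = q)
    (Δ : Matrix (Fin n) (Fin n) F) (W W' : Submodule F (Fin n → F))
    (hWW' : W ≤ W')
    (hW : W.map Δ.mulVecLin ≤ W) (hW' : W'.map Δ.mulVecLin ≤ W')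
    (a : ℕ) (ha : a ≤ Module.finrank F W' - Module.finrank F W) :
    Nat.card {U : Submodule F (Fin n → F) //
        U.map Δ.mulVecLin ≤ U ∧ W ≤ U ∧ U ≤ W' ∧
          Module.finrank F U = Module.finrank F W + a} =
      Nat.card {U : Submodule F (Fin n → F) //
        U.map Δ.mulVecLin ≤ U ∧ W ≤ U ∧ U ≤ W' ∧
          Module.finrank F U =
            Module.finrank F W + (Module.finrank F W' - Module.finrank F W - a)} := by
  classical
  set f := Δ.mulVecLin with hfdef
  have hres : ∀ x ∈ W', f x ∈ W' := fun x hx => hW' ⟨x, hx, rfl⟩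
  have hcomap : W.comap W'.subtype ≤ (W.comap W'.subtype).comap (f.restrict hres) :=
    fun x hx => show f x.1 ∈ W from hW ⟨x.1, hx, rfl⟩
  have hdim : Module.finrank F (W' ⧸ (W.comap W'.subtype)) =
      Module.finrank F W' - Module.finrank F W := by
    have h1 := Submodule.finrank_quotient_add_finrank (W.comap W'.subtype)
    have h2 : Module.finrank F (W.comap W'.subtype) = Module.finrank F W :=
      (Submodule.comapSubtypeEquivOfLe hWW').finrank_eq
    omega
  rw [card_interval f W W' hWW' hW hW' a hres hcomap,
    card_interval f W W' hWW' hW hW'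
      (Module.finrank F W' - Module.finrank F W - a) hres hcomap]
  have := key_count (Submodule.mapQ _ _ (f.restrict hres) hcomap) a (by omega)
  rw [hdim] at this
  exact this
end

section
/- Let q be a prime power, n, k, ℓ positive integers, and Δ ∈ M_n(𝔽_q). Then the number of k-tuples (v_1,…,v_k) ∈ (𝔽_q^n)^k such that Kry(Δ,{v_1,…,v_k},ℓ) = 𝔽_q^n is equal to Σ_{μ ⊢ n, ℓ(μ) ≤ ℓ} ( ∏_{j=0}^{μ1−1} (q^k − q^j) ) · σ(μ,Δ), where the sum is over all partitions μ of n with at most ℓ nonzero parts. -/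
open Matrix Module Polynomial

attribute [local instance] Classical.propDecidable

/-- The truncated Krylov subspace of order `ℓ` generated by the vectors `v 0, …, v (k-1)`:
the span of the vectors `Δ^i (v j)` with `i < ℓ`. -/
noncomputable def kry {F : Type} [Field F] {n k : ℕ} (Δ : Matrix (Fin n) (Fin n) F)
    (v : Fin k → (Fin n → F)) (ℓ : ℕ) : Submodule F (Fin n → F) :=
  ⨆ j : Fin k, ⨆ i ∈ Finset.range ℓ, Submodule.span F {(Δ ^ i).mulVec (v j)}

section Aux

open Submodule Set Finset Module

variable {F : Type} [Field F] {n : ℕ} (Δ : Matrix (Fin n) (Fin n) F)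

lemma iterSpan_zero (W : Submodule F (Fin n → F)) : iterSpan Δ W 0 = ⊥ := by
  simp [iterSpan]

lemma iterSpan_succ (W : Submodule F (Fin n → F)) (j : ℕ) :
    iterSpan Δ W (j + 1) = W.map ((Δ ^ j).mulVecLin) ⊔ iterSpan Δ W j := by
  rw [iterSpan, iterSpan, Finset.range_add_one, Finset.iSup_insert]

lemma iterSpan_one (W : Submodule F (Fin n → F)) : iterSpan Δ W 1 = W := by
  rw [iterSpan_succ, iterSpan_zero, pow_zero, Matrix.mulVecLin_one, Submodule.map_id,
    sup_bot_eq]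

lemma iterSpan_mono (W : Submodule F (Fin n → F)) : Monotone (iterSpan Δ W) := by
  intro a b hab
  refine iSup₂_le fun i hi => ?_
  exact le_iSup₂_of_le i (Finset.mem_range.2 ((Finset.mem_range.1 hi).trans_le hab)) le_rfl

lemma map_pow_succ (W : Submodule F (Fin n → F)) (i : ℕ) :
    W.map ((Δ ^ (i + 1)).mulVecLin) = (W.map ((Δ ^ i).mulVecLin)).map Δ.mulVecLin := by
  rw [pow_succ', Matrix.mulVecLin_mul, Submodule.map_comp]

lemma map_iterSpan_le (W : Submodule F (Fin n → F)) (j : ℕ) :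
    (iterSpan Δ W j).map Δ.mulVecLin ≤ iterSpan Δ W (j + 1) := by
  rw [iterSpan, Submodule.map_iSup]
  refine iSup_le fun i => ?_
  rw [Submodule.map_iSup]
  refine iSup_le fun hi => ?_
  rw [← map_pow_succ]
  have hij := Finset.mem_range.1 hi
  exact le_iSup₂_of_le (i + 1)
    (Finset.mem_range.2 (by omega : i + 1 < j + 1)) le_rfl

lemma iterSpan_succ_eq (W : Submodule F (Fin n → F)) (j : ℕ) :
    iterSpan Δ W (j + 2) = iterSpan Δ W (j + 1) ⊔ (iterSpan Δ W (j + 1)).map Δ.mulVecLin := by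
  refine le_antisymm ?_ ?_
  · rw [iterSpan_succ Δ W (j + 1)]
    refine sup_le ?_ le_sup_left
    rw [map_pow_succ]
    refine le_trans (Submodule.map_mono ?_) le_sup_right
    rw [iterSpan_succ]
    exact le_sup_left
  · exact sup_le (iterSpan_mono Δ W (by omega)) (map_iterSpan_le Δ W (j + 1))

set_option synthInstance.maxHeartbeats 1000000 in
lemma finrank_map_add_inf_ker (f : (Fin n → F) →ₗ[F] (Fin n → F))
    (p : Submodule F (Fin n → F)) :
    finrank F (p.map f) + finrank F ((LinearMap.ker f ⊓ p : Submodule F (Fin n → F))) =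
      finrank F p := by
  have h := LinearMap.finrank_range_add_finrank_ker (f.domRestrict p)
  rw [LinearMap.range_domRestrict, LinearMap.ker_domRestrict] at h
  rw [← h]
  congr 1
  have e : ((LinearMap.ker f).comap p.subtype) ≃ₗ[F]
      ((LinearMap.ker f ⊓ p : Submodule F (Fin n → F))) :=
    (Submodule.equivMapOfInjective p.subtype (Submodule.injective_subtype p)
      ((LinearMap.ker f).comap p.subtype)).trans
      (LinearEquiv.ofEq _ _ (by rw [Submodule.map_comap_subtype, inf_comm]))
  exact e.finrank_eq.symm

lemma finrank_iterSpan_concave (W : Submodule F (Fin n → F)) (j : ℕ) :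
    finrank F (iterSpan Δ W (j + 2)) + finrank F (iterSpan Δ W j) ≤
      2 * finrank F (iterSpan Δ W (j + 1)) := by
  set A := iterSpan Δ W (j + 1) with hA
  set B := iterSpan Δ W j with hB
  have h1 : iterSpan Δ W (j + 2) = A ⊔ A.map Δ.mulVecLin := iterSpan_succ_eq Δ W j
  have h2 := Submodule.finrank_sup_add_finrank_inf_eq A (A.map Δ.mulVecLin)
  have h3 := finrank_map_add_inf_ker Δ.mulVecLin A
  have h4 := finrank_map_add_inf_ker Δ.mulVecLin B
  have h5 : finrank F (B.map Δ.mulVecLin) ≤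
      finrank F ((A ⊓ A.map Δ.mulVecLin : Submodule F (Fin n → F))) :=
    Submodule.finrank_mono (le_inf (map_iterSpan_le Δ W j)
      (Submodule.map_mono (iterSpan_mono Δ W (by omega))))
  have h6 : finrank F ((LinearMap.ker Δ.mulVecLin ⊓ B : Submodule F (Fin n → F))) ≤
      finrank F ((LinearMap.ker Δ.mulVecLin ⊓ A : Submodule F (Fin n → F))) :=
    Submodule.finrank_mono (inf_le_inf_left _ (iterSpan_mono Δ W (by omega)))
  rw [h1]
  omega

/-- The increment sequence of dimensions of the iterated spans. -/
noncomputable def profAux (W : Submodule F (Fin n → F)) : ℕ → ℕ := fun j =>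
  finrank F (iterSpan Δ W (j + 1)) - finrank F (iterSpan Δ W j)

lemma finrank_iterSpan_mono (W : Submodule F (Fin n → F)) {a b : ℕ} (h : a ≤ b) :
    finrank F (iterSpan Δ W a) ≤ finrank F (iterSpan Δ W b) :=
  Submodule.finrank_mono (iterSpan_mono Δ W h)

lemma profAux_succ_le (W : Submodule F (Fin n → F)) (j : ℕ) :
    profAux Δ W (j + 1) ≤ profAux Δ W j := by
  have h0 := finrank_iterSpan_concave Δ W j
  have h1 := finrank_iterSpan_mono Δ W (show j ≤ j + 1 by omega)
  have h2 := finrank_iterSpan_mono Δ W (show j + 1 ≤ j + 2 by omega)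
  show finrank F (iterSpan Δ W (j + 2)) - finrank F (iterSpan Δ W (j + 1)) ≤
    finrank F (iterSpan Δ W (j + 1)) - finrank F (iterSpan Δ W j)
  omega

lemma profAux_anti (W : Submodule F (Fin n → F)) : Antitone (profAux Δ W) :=
  antitone_nat_of_succ_le (profAux_succ_le Δ W)

lemma finrank_iterSpan_eq_sum (W : Submodule F (Fin n → F)) (j : ℕ) :
    finrank F (iterSpan Δ W j) = ∑ i ∈ Finset.range j, profAux Δ W i := by
  induction j with
  | zero => simp [iterSpan_zero]
  | succ j ih =>
    rw [Finset.sum_range_succ, ← ih]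
    have := finrank_iterSpan_mono Δ W (show j ≤ j + 1 by omega)
    unfold profAux
    omega

lemma profAux_eq_zero (W : Submodule F (Fin n → F)) {j : ℕ} (hj : n ≤ j) :
    profAux Δ W j = 0 := by
  by_contra h
  have hpos : ∀ i ∈ Finset.range (j + 1), 1 ≤ profAux Δ W i := by
    intro i hi
    have hij := Finset.mem_range.1 hi
    have := profAux_anti Δ W (by omega : i ≤ j)
    omega
  have hsum : j + 1 ≤ ∑ i ∈ Finset.range (j + 1), profAux Δ W i := by
    calc j + 1 = ∑ _i ∈ Finset.range (j + 1), 1 := by simp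
    _ ≤ _ := Finset.sum_le_sum hpos
  rw [← finrank_iterSpan_eq_sum] at hsum
  have hle : finrank F (iterSpan Δ W (j + 1)) ≤ finrank F (Fin n → F) :=
    Submodule.finrank_le _
  have hfn : finrank F (Fin n → F) = n := by simp
  omega

/-- The `Δ`-profile of `W` as a finitely supported function. -/
noncomputable def profF (W : Submodule F (Fin n → F)) : ℕ →₀ ℕ :=
  Finsupp.onFinset (Finset.range n) (profAux Δ W) fun j hj =>
    Finset.mem_range.2 (by by_contra hc; exact hj (profAux_eq_zero Δ W (le_of_not_gt hc)))

lemma profF_apply (W : Submodule F (Fin n → F)) (j : ℕ) : profF Δ W j = profAux Δ W j := rfl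

lemma isPtn_profF (W : Submodule F (Fin n → F)) : IsPtn (profF Δ W) := fun i =>
  profAux_succ_le Δ W i

lemma hasProfile_profF (W : Submodule F (Fin n → F)) : HasProfile Δ (profF Δ W) W := fun j => by
  rw [finrank_iterSpan_eq_sum]
  exact Finset.sum_congr rfl fun i _ => rfl

lemma hasProfile_unique {μ : ℕ →₀ ℕ} {W : Submodule F (Fin n → F)}
    (h : HasProfile Δ μ W) : μ = profF Δ W := by
  have hp := hasProfile_profF Δ W
  ext j
  cases j with
  | zero =>
    have h1 := h 0
    have h2 := hp 0
    rw [Finset.sum_range_one] at h1 h2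
    omega
  | succ j =>
    have h1 := h (j + 1)
    have h2 := hp (j + 1)
    have h3 := h j
    have h4 := hp j
    rw [Finset.sum_range_succ] at h1 h2
    omega

lemma kry_eq_iterSpan {k : ℕ} (v : Fin k → (Fin n → F)) (ℓ : ℕ) :
    kry Δ v ℓ = iterSpan Δ (Submodule.span F (Set.range v)) ℓ := by
  refine le_antisymm ?_ ?_
  · refine iSup_le fun j => iSup₂_le fun i hi => ?_
    rw [Submodule.span_le, Set.singleton_subset_iff, SetLike.mem_coe]
    refine Submodule.mem_iSup_of_mem i (Submodule.mem_iSup_of_mem hi ?_)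
    exact ⟨v j, Submodule.subset_span ⟨j, rfl⟩, by rw [Matrix.mulVecLin_apply]⟩
  · refine iSup₂_le fun i hi => ?_
    rw [Submodule.map_le_iff_le_comap, Submodule.span_le]
    rintro x ⟨j, rfl⟩
    rw [SetLike.mem_coe, Submodule.mem_comap]
    refine Submodule.mem_iSup_of_mem j (Submodule.mem_iSup_of_mem i
      (Submodule.mem_iSup_of_mem hi ?_))
    rw [Matrix.mulVecLin_apply]
    exact Submodule.mem_span_singleton_self _

end Aux
section Count

open Submodule Set Finset Module

variable {F : Type} [Field F] [Fintype F]

lemma span_coe_top_iff {n k : ℕ} (W : Submodule F (Fin n → F)) (v : Fin k → (Fin n → F))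
    (hv : ∀ j, v j ∈ W) :
    Submodule.span F (Set.range v) = W ↔
      Submodule.span F (Set.range fun j => (⟨v j, hv j⟩ : W)) = ⊤ := by
  have key : Submodule.map W.subtype
      (Submodule.span F (Set.range fun j => (⟨v j, hv j⟩ : W))) =
      Submodule.span F (Set.range v) := by
    rw [Submodule.map_span, ← Set.range_comp]
    rfl
  constructor
  · intro h
    apply Submodule.map_injective_of_injective (Submodule.injective_subtype W)
    rw [key, Submodule.map_subtype_top, h]
  · intro h
    rw [← key, h, Submodule.map_subtype_top]

lemma span_equiv_top_iff {V₁ V₂ : Type} [AddCommGroup V₁] [AddCommGroup V₂]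
    [Module F V₁] [Module F V₂] (e : V₁ ≃ₗ[F] V₂) {k : ℕ} (w : Fin k → V₁) :
    Submodule.span F (Set.range w) = ⊤ ↔
      Submodule.span F (Set.range fun j => e (w j)) = ⊤ := by
  have key : Submodule.span F (Set.range fun j => e (w j)) =
      Submodule.map (e : V₁ →ₗ[F] V₂) (Submodule.span F (Set.range w)) := by
    rw [Submodule.map_span, ← Set.range_comp]
    rfl
  constructor
  · intro h
    rw [key, h, Submodule.map_top, LinearEquiv.range]
  · intro h
    refine Submodule.map_injective_of_injective (f := (e : V₁ →ₗ[F] V₂)) e.injective ?_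
    rw [← key, h, Submodule.map_top, LinearEquiv.range]

lemma span_top_iff_li {d k : ℕ} (u : Fin k → (Fin d → F)) :
    Submodule.span F (Set.range u) = ⊤ ↔
      LinearIndependent F (fun i (j : Fin k) => u j i) := by
  classical
  let N : Matrix (Fin k) (Fin d) F := Matrix.of u
  have hfd : finrank F (Fin d → F) = d := by simp
  have key : finrank F (Submodule.span F (Set.range u)) =
      Set.finrank F (Set.range fun i (j : Fin k) => u j i) := by
    rw [Set.finrank, show (fun i (j : Fin k) => u j i) = N.col from rfl,
      ← Matrix.rank_eq_finrank_span_cols, Matrix.rank_eq_finrank_span_row]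
    rfl
  rw [linearIndependent_iff_card_eq_finrank_span, Fintype.card_fin, ← key]
  constructor
  · intro h
    rw [h, finrank_top, hfd]
  · intro h
    exact Submodule.eq_top_of_finrank_eq (by rw [← h, hfd])

lemma card_span_top {d k : ℕ} (hd : d ≤ k) :
    Nat.card {u : Fin k → (Fin d → F) // Submodule.span F (Set.range u) = ⊤} =
      ∏ j ∈ Finset.range d, (Fintype.card F ^ k - Fintype.card F ^ j) := by
  have e : {u : Fin k → (Fin d → F) // Submodule.span F (Set.range u) = ⊤} ≃
      {s : Fin d → (Fin k → F) // LinearIndependent F s} :=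
    { toFun := fun u => ⟨fun i j => u.1 j i, (span_top_iff_li u.1).1 u.2⟩
      invFun := fun s => ⟨fun j i => s.1 i j, by
        have := s.2
        exact (span_top_iff_li (fun j i => s.1 i j)).2 this⟩
      left_inv := fun _ => rfl
      right_inv := fun _ => rfl }
  rw [Nat.card_congr e,
    card_linearIndependent (K := F) (V := Fin k → F) (by simpa using hd)]
  rw [← Fin.prod_univ_eq_prod_range]
  simp

lemma card_span_eq {n : ℕ} (k : ℕ) (W : Submodule F (Fin n → F)) :
    Nat.card {v : Fin k → (Fin n → F) // Submodule.span F (Set.range v) = W} =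
      ∏ j ∈ Finset.range (finrank F W), (Fintype.card F ^ k - Fintype.card F ^ j) := by
  classical
  by_cases hd : finrank F W ≤ k
  · set d := finrank F W with hdef
    let e : W ≃ₗ[F] (Fin d → F) := (Module.finBasis F W).equivFun
    have Φ : {v : Fin k → (Fin n → F) // Submodule.span F (Set.range v) = W} ≃
        {u : Fin k → (Fin d → F) // Submodule.span F (Set.range u) = ⊤} :=
      { toFun := fun v => ⟨fun j => e ⟨v.1 j,
            v.2.le (Submodule.subset_span ⟨j, rfl⟩)⟩, by
          rw [← span_equiv_top_iff e, ← span_coe_top_iff W v.1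
            (fun j => v.2.le (Submodule.subset_span ⟨j, rfl⟩))]
          exact v.2⟩
        invFun := fun u => ⟨fun j => ((e.symm (u.1 j) : W) : Fin n → F), by
          rw [span_coe_top_iff W _ (fun j => (e.symm (u.1 j)).2)]
          have h2 : (fun j => (⟨((e.symm (u.1 j) : W) : Fin n → F),
              (e.symm (u.1 j)).2⟩ : W)) = fun j => e.symm (u.1 j) := rfl
          rw [h2, span_equiv_top_iff e]
          simp only [LinearEquiv.apply_symm_apply]
          exact u.2⟩
        left_inv := fun v => Subtype.ext (funext fun j => by simp)
        right_inv := fun u => Subtype.ext (funext fun j => by simp) }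
    rw [Nat.card_congr Φ, card_span_top hd]
  · have hempty : IsEmpty {v : Fin k → (Fin n → F) // Submodule.span F (Set.range v) = W} := by
      constructor
      rintro ⟨v, hv⟩
      apply hd
      rw [← hv]
      refine le_trans (finrank_span_le_card (Set.range v)) ?_
      rw [Set.toFinset_range]
      exact le_trans (Finset.card_image_le) (by simp)
    rw [Nat.card_of_isEmpty]
    refine (Finset.prod_eq_zero (i := k) (Finset.mem_range.2 ?_) (show Fintype.card F ^ k - Fintype.card F ^ k = 0 from Nat.sub_self _)).symm
    omega

end Count
lemma ptnSize_eq_sum_range {μ : ℕ →₀ ℕ} {m : ℕ} (h : ∀ i, m ≤ i → μ i = 0) :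
    ptnSize μ = ∑ i ∈ Finset.range m, μ i := by
  rw [ptnSize, Finsupp.sum]
  apply Finset.sum_subset
  · intro i hi
    rw [Finset.mem_range]
    by_contra hc
    exact (Finsupp.mem_support_iff.1 hi) (h i (le_of_not_gt hc))
  · intro i _ hi
    exact Finsupp.notMem_support_iff.1 hi

/-- The number of `k`-tuples of vectors whose order-`ℓ` truncated Krylov
subspace is all of `F^n` equals
`∑_{μ ⊢ n, ℓ(μ) ≤ ℓ} (∏_{j=0}^{μ₁-1} (q^k - q^j)) σ(μ,Δ)`. -/
theorem statement6 (q : ℕ) (hq : IsPrimePow q) (n k ℓ : ℕ) (hn : 0 < n)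
    (hk : 0 < k) (hℓ : 0 < ℓ)
    (F : Type) [Field F] [Fintype F] (hF : Fintype.card F = q)
    (Δ : Matrix (Fin n) (Fin n) F) :
    (Nat.card {v : Fin k → (Fin n → F) // kry Δ v ℓ = ⊤} : ℤ) =
      ∑ᶠ μ ∈ {μ : ℕ →₀ ℕ | IsPtn μ ∧ ptnSize μ = n ∧ ∀ i, ℓ ≤ i → μ i = 0},
        (∏ j ∈ Finset.range (μ 0), ((q : ℤ) ^ k - (q : ℤ) ^ j)) * (sigmaProf μ Δ : ℤ) := by
  classical
  subst hF
  set q := Fintype.card F with hqdef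
  have hq1 : 1 ≤ q := Fintype.card_pos
  have hfn : Module.finrank F (Fin n → F) = n := by simp
  haveI : Finite (Submodule F (Fin n → F)) :=
    Finite.of_injective (fun W => (W : Set (Fin n → F))) SetLike.coe_injective
  letI : Fintype (Submodule F (Fin n → F)) := Fintype.ofFinite _
  set N : ℕ → ℕ := fun d => ∏ j ∈ Finset.range d, (q ^ k - q ^ j) with hN
  set S : Set (ℕ →₀ ℕ) := {μ | IsPtn μ ∧ ptnSize μ = n ∧ ∀ i, ℓ ≤ i → μ i = 0} with hS
  set t : Finset (Submodule F (Fin n → F)) :=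
    Finset.univ.filter (fun W => iterSpan Δ W ℓ = ⊤) with ht
  set T : Finset (ℕ →₀ ℕ) := t.image (profF Δ) with hT
  set g : (ℕ →₀ ℕ) → ℤ := fun μ =>
    (∏ j ∈ Finset.range (μ 0), ((q : ℤ) ^ k - (q : ℤ) ^ j)) * (sigmaProf μ Δ : ℤ) with hg
  -- cast of the truncated natural product
  have castN : ∀ d : ℕ, ((N d : ℤ)) =
      ∏ j ∈ Finset.range d, ((q : ℤ) ^ k - (q : ℤ) ^ j) := by
    intro d
    by_cases hdk : d ≤ k
    · rw [hN, Nat.cast_prod]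
      refine Finset.prod_congr rfl fun j hj => ?_
      have hj' := Finset.mem_range.1 hj
      rw [Nat.cast_sub (Nat.pow_le_pow_right hq1 (by omega))]
      push_cast
      ring
    · have hk' : k ∈ Finset.range d := Finset.mem_range.2 (by omega)
      have h1 : N d = 0 := Finset.prod_eq_zero hk' (Nat.sub_self _)
      have h2 : ∏ j ∈ Finset.range d, ((q : ℤ) ^ k - (q : ℤ) ^ j) = 0 :=
        Finset.prod_eq_zero hk' (sub_self _)
      rw [h1, h2]
      simp
  -- finrank W is the first entry of the profile
  have profF0 : ∀ W : Submodule F (Fin n → F), Module.finrank F W = profF Δ W 0 := by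
    intro W
    rw [profF_apply]
    show _ = Module.finrank F (iterSpan Δ W 1) - Module.finrank F (iterSpan Δ W 0)
    rw [iterSpan_one, iterSpan_zero]
    simp
  -- profiles of spanning subspaces lie in S
  have P1 : ∀ W ∈ t, profF Δ W ∈ S := by
    intro W hW
    have hcond : iterSpan Δ W ℓ = ⊤ := (Finset.mem_filter.1 hW).2
    have htop : ∀ m, ℓ ≤ m → iterSpan Δ W m = ⊤ := fun m hm =>
      le_antisymm le_top (by rw [← hcond]; exact iterSpan_mono Δ W hm)
    have hvan : ∀ i, ℓ ≤ i → profF Δ W i = 0 := by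
      intro i hi
      rw [profF_apply]
      show Module.finrank F (iterSpan Δ W (i + 1)) - Module.finrank F (iterSpan Δ W i) = 0
      rw [htop (i + 1) (by omega), htop i hi]
      omega
    refine ⟨isPtn_profF Δ W, ?_, hvan⟩
    rw [ptnSize_eq_sum_range hvan]
    have := finrank_iterSpan_eq_sum Δ W ℓ
    rw [hcond, finrank_top, hfn] at this
    have h2 : ∑ i ∈ Finset.range ℓ, profF Δ W i = ∑ i ∈ Finset.range ℓ, profAux Δ W i :=
      Finset.sum_congr rfl fun i _ => rfl
    rw [h2]
    exact this.symm
  -- characterization of HasProfile for μ ∈ S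
  have P2 : ∀ μ ∈ S, ∀ W : Submodule F (Fin n → F),
      HasProfile Δ μ W ↔ (iterSpan Δ W ℓ = ⊤ ∧ profF Δ W = μ) := by
    intro μ hμ W
    constructor
    · intro h
      have huniq := hasProfile_unique Δ h
      refine ⟨?_, huniq.symm⟩
      have hsum : Module.finrank F (iterSpan Δ W ℓ) = ∑ i ∈ Finset.range ℓ, μ i := by
        obtain ⟨ℓ', rfl⟩ : ∃ ℓ', ℓ = ℓ' + 1 := ⟨ℓ - 1, by omega⟩
        exact h ℓ'
      have hval : Module.finrank F (iterSpan Δ W ℓ) = n := by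
        rw [hsum, ← ptnSize_eq_sum_range hμ.2.2, hμ.2.1]
      exact Submodule.eq_top_of_finrank_eq (by rw [hval, hfn])
    · rintro ⟨_, rfl⟩
      exact hasProfile_profF Δ W
  -- σ as a fiber cardinality
  have σcard : ∀ μ ∈ S, sigmaProf μ Δ =
      (t.filter (fun W => profF Δ W = μ)).card := by
    intro μ hμ
    rw [sigmaProf, Nat.card_eq_fintype_card, Fintype.card_subtype]
    congr 1
    ext W
    simp only [Finset.mem_filter, Finset.mem_univ, true_and, ht]
    exact P2 μ hμ W
  -- main counting identity over ℕ
  have main : Nat.card {v : Fin k → (Fin n → F) // kry Δ v ℓ = ⊤} =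
      ∑ μ ∈ T, N (μ 0) * sigmaProf μ Δ := by
    have e1 : {v : Fin k → (Fin n → F) // kry Δ v ℓ = ⊤} ≃
        {v : Fin k → (Fin n → F) //
          iterSpan Δ (Submodule.span F (Set.range v)) ℓ = ⊤} :=
      Equiv.subtypeEquivRight fun v => by rw [kry_eq_iterSpan]
    rw [Nat.card_congr e1, Nat.card_eq_fintype_card, Fintype.card_subtype]
    rw [Finset.card_eq_sum_card_fiberwise
      (f := fun v : Fin k → (Fin n → F) => Submodule.span F (Set.range v)) (t := t)
      (fun v hv => Finset.mem_filter.2 ⟨Finset.mem_univ _, (Finset.mem_filter.1 hv).2⟩)]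
    have fib : ∀ W ∈ t,
        ((Finset.univ.filter fun v : Fin k → (Fin n → F) =>
            iterSpan Δ (Submodule.span F (Set.range v)) ℓ = ⊤).filter
          (fun v => Submodule.span F (Set.range v) = W)).card = N (Module.finrank F W) := by
      intro W hW
      have hset : ((Finset.univ.filter fun v : Fin k → (Fin n → F) =>
            iterSpan Δ (Submodule.span F (Set.range v)) ℓ = ⊤).filter
          (fun v => Submodule.span F (Set.range v) = W)) =
          Finset.univ.filter (fun v : Fin k → (Fin n → F) =>
            Submodule.span F (Set.range v) = W) := by
        ext v
        simp only [Finset.mem_filter, Finset.mem_univ, true_and]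
        constructor
        · rintro ⟨_, h2⟩
          exact h2
        · intro h2
          exact ⟨by rw [h2]; exact (Finset.mem_filter.1 hW).2, h2⟩
      rw [hset, ← Fintype.card_subtype, ← Nat.card_eq_fintype_card, card_span_eq]
    rw [Finset.sum_congr rfl fib]
    rw [← Finset.sum_fiberwise_of_maps_to
      (fun W hW => Finset.mem_image_of_mem (profF Δ) hW)
      (fun W => N (Module.finrank F W))]
    refine Finset.sum_congr rfl fun μ hμT => ?_
    have hμS : μ ∈ S := by
      obtain ⟨W, hWt, rfl⟩ := Finset.mem_image.1 hμT
      exact P1 W hWt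
    have hconst : ∀ W ∈ t.filter (fun W => profF Δ W = μ),
        N (Module.finrank F W) = N (μ 0) := by
      intro W hW
      rw [profF0 W, (Finset.mem_filter.1 hW).2]
    rw [Finset.sum_congr rfl hconst, Finset.sum_const, smul_eq_mul,
      ← σcard μ hμS, mul_comm]
  -- support of the summand
  have hsupp : S ∩ Function.support g = ↑T ∩ Function.support g := by
    ext μ
    simp only [Set.mem_inter_iff, Function.mem_support, Finset.mem_coe]
    constructor
    · rintro ⟨hμS, hgne⟩
      refine ⟨?_, hgne⟩
      have hσ : sigmaProf μ Δ ≠ 0 := by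
        intro h0
        apply hgne
        rw [hg]
        simp [h0]
      have hne : Nonempty {W : Submodule F (Fin n → F) // HasProfile Δ μ W} :=
        (Nat.card_ne_zero.1 hσ).1
      obtain ⟨⟨W, hW⟩⟩ := hne
      obtain ⟨hc, hpf⟩ := (P2 μ hμS W).1 hW
      exact Finset.mem_image.2 ⟨W, Finset.mem_filter.2 ⟨Finset.mem_univ _, hc⟩, hpf⟩
    · rintro ⟨hμT, hgne⟩
      refine ⟨?_, hgne⟩
      obtain ⟨W, hWt, rfl⟩ := Finset.mem_image.1 hμT
      exact P1 W hWt
  rw [main, finsum_mem_eq_sum_of_inter_support_eq g hsupp, Nat.cast_sum]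
  refine Finset.sum_congr rfl fun μ _ => ?_
  rw [Nat.cast_mul, castN, hg]
end
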